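/- arXiv:2104.14997 — 5 statements merged into one kernel-verified Lean document; each statement's English description precedes it below -/
import Mathlib

section
/- Let Z be a real reflexive Banach space continuously and densely embedded in a real Banach space V, τ > 0, and let R : Z → [0,∞] be proper, convex, lower semicontinuous and positively 1-homogeneous (R(λv) = λ·R(v) for all v ∈ Z, λ > 0). Let I_τ be the indicator functional of {v ∈ Z : ‖v‖_V ≤ τ}. Then for every η ∈ Z* the Fenchel conjugate of R + I_τ satisfies (R + I_τ)*(η) = τ·dist_{V*}(η, ∂R(0)), where dist_{V*}(η, ∂R(0)) := inf{‖η − w‖_{V*} : w ∈ ∂R(0), η − w ∈ V*}, interpreted as +∞ if no w ∈ ∂R(0) with η − w ∈ V* exists. -/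
/-!
The inequality `(R + I_τ)* (η) ≤ τ ‖η - w‖_{V*}` for `w ∈ ∂R(0)` is immediate, because
`∂R(0) = {w : w ≤ R}` when `R(0) = 0`. Conversely, if the conjugate is a finite `c`, testing it
on the rescaled vectors `(τ / ‖v‖_V) v` gives `η ≤ R + (c / τ) ‖·‖_V`. A Hahn–Banach sandwich
between the sublinear functions `R` and `(c / τ) ‖·‖_V + η` (via their infimal convolution)
then yields a linear `w ≤ R` with `|η - w| ≤ (c / τ) ‖·‖_V`, i.e. `‖η - w‖_{V*} ≤ c / τ`.
-/

open Set Filter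

variable {Z V : Type*} [NormedAddCommGroup Z] [NormedSpace ℝ Z]
  [NormedAddCommGroup V] [NormedSpace ℝ V]

/-- `η ∈ Z*` is bounded with respect to the `V`-norm on `Z` (i.e. `η` belongs to `V*`,
identified with a subspace of `Z*` via the dense embedding `ι : Z ↪ V`). -/
def InVdual (ι : Z →L[ℝ] V) (η : Z →L[ℝ] ℝ) : Prop :=
  ∃ C : ℝ, ∀ z : Z, |η z| ≤ C * ‖ι z‖

/-- The `V*`-norm of `η ∈ Z*`: `‖η‖_{V*} = sup{⟨η, v⟩ : v ∈ Z, ‖v‖_V ≤ 1}`. -/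
noncomputable def VdualNorm (ι : Z →L[ℝ] V) (η : Z →L[ℝ] ℝ) : ℝ :=
  sSup {r : ℝ | ∃ z : Z, ‖ι z‖ ≤ 1 ∧ r = η z}

/-- The extended distance `dist_{V*}(η, A) = inf{‖η − w‖_{V*} : w ∈ A, η − w ∈ V*}`,
interpreted as `+∞` (in `EReal`) if no such `w` exists. -/
noncomputable def distVdual (ι : Z →L[ℝ] V) (η : Z →L[ℝ] ℝ) (A : Set (Z →L[ℝ] ℝ)) : EReal :=
  sInf {r : EReal | ∃ w ∈ A, InVdual ι (η - w) ∧ r = ((VdualNorm ι (η - w) : ℝ) : EReal)}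

/-- The indicator functional `I_τ` of `{v ∈ Z : ‖v‖_V ≤ τ}`, with values in `EReal`. -/
noncomputable def indic (ι : Z →L[ℝ] V) (τ : ℝ) (v : Z) : EReal :=
  if ‖ι v‖ ≤ τ then 0 else ⊤

/-- The subdifferential of an extended-real-valued convex functional `f : Z → EReal` at `x`:
`∂f(x) = {η ∈ Z* : f(y) ≥ f(x) + ⟨η, y − x⟩ for all y ∈ Z}`. -/
def subdiffE (f : Z → EReal) (x : Z) : Set (Z →L[ℝ] ℝ) :=
  {η | ∀ y : Z, f x + ((η (y - x) : ℝ) : EReal) ≤ f y}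

/-- The Fenchel conjugate `f*(η) = sup_{x ∈ Z} (⟨η, x⟩ − f(x))`, with values in `EReal`. -/
noncomputable def conjE (f : Z → EReal) (η : Z →L[ℝ] ℝ) : EReal :=
  ⨆ x : Z, ((η x : ℝ) : EReal) - f x

open Topology Pointwise

section Sublinear

variable {E : Type*} [AddCommGroup E]

/-- The real upper bounds of the values `R a + p (v - a)`, whose infimum is the infimal
convolution `inf_a (R a + p (v - a))`. -/
def infConvSet (R : E → EReal) (p : E → ℝ) (v : E) : Set ℝ :=
  {x | ∃ a, ∃ r : ℝ, R a ≤ r ∧ r + p (v - a) ≤ x}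

noncomputable def infConv (R : E → EReal) (p : E → ℝ) (v : E) : ℝ :=
  sInf (infConvSet R p v)

variable {R : E → EReal} {p : E → ℝ}

theorem infConvSet_nonempty (hR0 : R 0 = 0) (v : E) : (infConvSet R p v).Nonempty :=
  ⟨_, 0, 0, by simp [hR0], le_rfl⟩

theorem neg_apply_neg_mem_lowerBounds_infConvSet (hpadd : ∀ a b, p (a + b) ≤ p a + p b)
    (hRp : ∀ v, ((-p (-v) : ℝ) : EReal) ≤ R v) (v : E) :
    -p (-v) ∈ lowerBounds (infConvSet R p v) := by
  rintro x ⟨a, r, hr, hx⟩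
  have h1 : -p (-a) ≤ r := EReal.coe_le_coe_iff.1 ((hRp a).trans hr)
  have h2 := hpadd (v - a) (-v)
  rw [show v - a + -v = -a by abel] at h2
  linarith

theorem infConv_le (hpadd : ∀ a b, p (a + b) ≤ p a + p b)
    (hRp : ∀ v, ((-p (-v) : ℝ) : EReal) ≤ R v) {v a : E} {r : ℝ} (h : R a ≤ r) :
    infConv R p v ≤ r + p (v - a) :=
  csInf_le ⟨_, neg_apply_neg_mem_lowerBounds_infConvSet hpadd hRp v⟩ ⟨a, r, h, le_rfl⟩

theorem infConv_add_le (hR0 : R 0 = 0) (hRadd : ∀ a b, R (a + b) ≤ R a + R b)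
    (hpadd : ∀ a b, p (a + b) ≤ p a + p b) (hRp : ∀ v, ((-p (-v) : ℝ) : EReal) ≤ R v) (u v : E) :
    infConv R p (u + v) ≤ infConv R p u + infConv R p v := by
  have hbdd := fun v => (⟨_, neg_apply_neg_mem_lowerBounds_infConvSet hpadd hRp v⟩ :
    BddBelow (infConvSet R p v))
  rw [infConv, infConv, infConv, ← csInf_add (infConvSet_nonempty hR0 u) (hbdd u)
    (infConvSet_nonempty hR0 v) (hbdd v)]
  refine csInf_le_csInf (hbdd _) ((infConvSet_nonempty hR0 u).add (infConvSet_nonempty hR0 v)) ?_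
  rintro _ ⟨x, ⟨a, r, hr, hx⟩, y, ⟨b, s, hs, hy⟩, rfl⟩
  refine ⟨a + b, r + s, (hRadd a b).trans (EReal.coe_add r s ▸ add_le_add hr hs), ?_⟩
  have := hpadd (u - a) (v - b)
  rw [show u - a + (v - b) = u + v - (a + b) by abel] at this
  linarith

variable [Module ℝ E]

theorem apply_add_le_of_convex_of_homogeneous (hR : ∀ v, 0 ≤ R v)
    (hconv : ∀ x y : E, ∀ a b : ℝ, 0 ≤ a → 0 ≤ b → a + b = 1 →
      R (a • x + b • y) ≤ (a : EReal) * R x + (b : EReal) * R y)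
    (hhom : ∀ (v : E) (l : ℝ), 0 < l → R (l • v) = (l : EReal) * R v) (a b : E) :
    R (a + b) ≤ R a + R b := by
  have hsum : a + b = (2 : ℝ) • ((1 / 2 : ℝ) • a + (1 / 2 : ℝ) • b) := by
    rw [smul_add, smul_smul, smul_smul]; norm_num
  calc R (a + b) = ((2 : ℝ) : EReal) * R ((1 / 2 : ℝ) • a + (1 / 2 : ℝ) • b) := by
        rw [hsum, hhom _ 2 two_pos]
    _ ≤ ((2 : ℝ) : EReal) * (((1 / 2 : ℝ) : EReal) * R a + ((1 / 2 : ℝ) : EReal) * R b) :=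
        mul_le_mul_of_nonneg_left (hconv a b _ _ (by norm_num) (by norm_num) (by norm_num))
          (by norm_num)
    _ = R a + R b := by
        rw [EReal.left_distrib_of_nonneg (mul_nonneg (by norm_num) (hR a))
          (mul_nonneg (by norm_num) (hR b)), ← mul_assoc, ← mul_assoc, ← EReal.coe_mul]
        norm_num

theorem apply_zero_eq_zero_of_homogeneous [TopologicalSpace E] [ContinuousSMul ℝ E]
    (hR : ∀ v, 0 ≤ R v) (hproper : ∃ v, R v ≠ ⊤) (hlsc : LowerSemicontinuous R)
    (hhom : ∀ (v : E) (l : ℝ), 0 < l → R (l • v) = (l : EReal) * R v) :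
    R 0 = 0 := by
  obtain ⟨v, hv⟩ := hproper
  set r := (R v).toReal
  have hr : R v = r := (EReal.coe_toReal hv (ne_bot_of_le_ne_bot EReal.zero_ne_bot (hR v))).symm
  refine le_antisymm ?_ (hR 0)
  by_contra! h
  obtain ⟨y, hy0, hyR⟩ := EReal.lt_iff_exists_real_btwn.1 h
  have hsmul : Tendsto (fun l : ℝ => l • v) (𝓝[>] 0) (𝓝 0) :=
    tendsto_nhdsWithin_of_tendsto_nhds
      ((continuous_id.smul continuous_const).tendsto' 0 0 (zero_smul ℝ v))
  have hmul : Tendsto (fun l : ℝ => l * r) (𝓝[>] 0) (𝓝 0) :=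
    tendsto_nhdsWithin_of_tendsto_nhds
      ((continuous_id.mul continuous_const).tendsto' 0 0 (zero_mul r))
  obtain ⟨l, hlR, hlr, hl⟩ := ((hsmul.eventually (hlsc 0 y hyR)).and
    ((hmul.eventually (gt_mem_nhds (EReal.coe_pos.1 hy0))).and self_mem_nhdsWithin)).exists
  rw [hhom v l hl, hr, ← EReal.coe_mul] at hlR
  exact hlr.not_gt (EReal.coe_lt_coe_iff.1 hlR)

theorem infConv_smul_le (hR0 : R 0 = 0)
    (hRsmul : ∀ (v : E) (l : ℝ), 0 < l → R (l • v) = (l : EReal) * R v)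
    (hpadd : ∀ a b, p (a + b) ≤ p a + p b) (hpsmul : ∀ (v : E) (l : ℝ), 0 < l → p (l • v) = l * p v)
    (hRp : ∀ v, ((-p (-v) : ℝ) : EReal) ≤ R v) {l : ℝ} (hl : 0 < l) (v : E) :
    infConv R p (l • v) ≤ l * infConv R p v := by
  rw [infConv, infConv, ← smul_eq_mul, ← Real.sInf_smul_of_nonneg hl.le]
  refine csInf_le_csInf ⟨_, neg_apply_neg_mem_lowerBounds_infConvSet hpadd hRp _⟩
    (infConvSet_nonempty hR0 v).smul_set ?_
  rintro _ ⟨x, ⟨a, r, hr, hx⟩, rfl⟩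
  refine ⟨l • a, l * r, ?_, ?_⟩
  · rw [hRsmul a l hl, EReal.coe_mul]
    exact mul_le_mul_of_nonneg_left hr (by exact_mod_cast hl.le)
  · rw [← smul_sub, hpsmul _ l hl]
    change _ ≤ l * x
    nlinarith

theorem infConv_smul (hR0 : R 0 = 0)
    (hRsmul : ∀ (v : E) (l : ℝ), 0 < l → R (l • v) = (l : EReal) * R v)
    (hpadd : ∀ a b, p (a + b) ≤ p a + p b) (hpsmul : ∀ (v : E) (l : ℝ), 0 < l → p (l • v) = l * p v)
    (hRp : ∀ v, ((-p (-v) : ℝ) : EReal) ≤ R v) {l : ℝ} (hl : 0 < l) (v : E) :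
    infConv R p (l • v) = l * infConv R p v := by
  refine le_antisymm (infConv_smul_le hR0 hRsmul hpadd hpsmul hRp hl v) ?_
  have := infConv_smul_le hR0 hRsmul hpadd hpsmul hRp (inv_pos.2 hl) (l • v)
  rwa [inv_smul_smul₀ hl.ne', le_inv_mul_iff₀ hl] at this

theorem exists_linearMap_le_of_sublinear (hR0 : R 0 = 0) (hRadd : ∀ a b, R (a + b) ≤ R a + R b)
    (hRsmul : ∀ (v : E) (l : ℝ), 0 < l → R (l • v) = (l : EReal) * R v)
    (hpadd : ∀ a b, p (a + b) ≤ p a + p b) (hpsmul : ∀ (v : E) (l : ℝ), 0 < l → p (l • v) = l * p v)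
    (hRp : ∀ v, ((-p (-v) : ℝ) : EReal) ≤ R v) :
    ∃ g : E →ₗ[ℝ] ℝ, (∀ v, (g v : EReal) ≤ R v) ∧ ∀ v, g v ≤ p v := by
  have hp0 : p 0 = 0 := by
    have := hpsmul 0 2 two_pos
    rw [smul_zero] at this
    linarith
  have hN0 : 0 ≤ infConv R p 0 := by
    simpa [hp0, infConv] using le_csInf (infConvSet_nonempty hR0 0)
      (neg_apply_neg_mem_lowerBounds_infConvSet hpadd hRp 0)
  obtain ⟨g, -, hg⟩ := exists_extension_of_le_sublinear (LinearMap.toPMap 0 ⊥) (infConv R p)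
    (fun l hl v => infConv_smul hR0 hRsmul hpadd hpsmul hRp hl v)
    (infConv_add_le hR0 hRadd hpadd hRp) fun x => by
      change (0 : E →ₗ[ℝ] ℝ) x ≤ infConv R p x
      simpa [(Submodule.mem_bot ℝ).1 x.2] using hN0
  refine ⟨g, fun v => ?_, fun v => by
    simpa [hR0] using (hg v).trans (infConv_le hpadd hRp (v := v) (a := 0) (r := 0) (by simp [hR0]))⟩
  by_contra! h
  obtain ⟨r, hRr, hrg⟩ := EReal.lt_iff_exists_real_btwn.1 h
  have := (hg v).trans (infConv_le hpadd hRp hRr.le)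
  rw [sub_self, hp0, add_zero] at this
  exact (EReal.coe_lt_coe_iff.1 hrg).not_ge this

end Sublinear

theorem le_div_mul_of_forall_mul_le {d n c τ : ℝ} (hc : 0 ≤ c) (hτ : 0 < τ) (hn : 0 ≤ n)
    (h : ∀ l, 0 < l → l * n ≤ τ → l * d ≤ c) : d ≤ c / τ * n := by
  rcases le_or_gt d 0 with hd | hd
  · exact hd.trans (by positivity)
  rcases hn.eq_or_lt with rfl | hn
  · have := h ((c + 1) / d) (by positivity) (by simpa using hτ.le)
    rw [div_mul_cancel₀ _ hd.ne'] at this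
    linarith
  · have := h (τ / n) (by positivity) (by rw [div_mul_cancel₀ _ hn.ne'])
    rw [div_mul_eq_mul_div, div_le_iff₀ hn] at this
    rw [div_mul_eq_mul_div, le_div_iff₀ hτ]
    linarith

section VdualNorm

variable {ι : Z →L[ℝ] V} {ξ : Z →L[ℝ] ℝ}

theorem InVdual.bddAbove (h : InVdual ι ξ) : BddAbove {r : ℝ | ∃ z : Z, ‖ι z‖ ≤ 1 ∧ r = ξ z} := by
  obtain ⟨C, hC⟩ := h
  refine ⟨|C|, ?_⟩
  rintro _ ⟨z, hz, rfl⟩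
  calc ξ z ≤ C * ‖ι z‖ := (le_abs_self _).trans (hC z)
    _ ≤ |C| * ‖ι z‖ := by gcongr; exact le_abs_self C
    _ ≤ |C| := mul_le_of_le_one_right (abs_nonneg C) hz

theorem InVdual.apply_le_VdualNorm (h : InVdual ι ξ) {z : Z} (hz : ‖ι z‖ ≤ 1) :
    ξ z ≤ VdualNorm ι ξ :=
  le_csSup h.bddAbove ⟨z, hz, rfl⟩

theorem InVdual.VdualNorm_nonneg (h : InVdual ι ξ) : 0 ≤ VdualNorm ι ξ := by
  simpa using h.apply_le_VdualNorm (z := 0) (by simp)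

theorem InVdual.apply_le_VdualNorm_mul (h : InVdual ι ξ) (z : Z) :
    ξ z ≤ VdualNorm ι ξ * ‖ι z‖ := by
  rcases (norm_nonneg (ι z)).eq_or_lt with hz | hz
  · obtain ⟨C, hC⟩ := h
    have := hC z
    rw [← hz, mul_zero] at this
    rw [← hz, mul_zero]
    exact (le_abs_self _).trans this
  · have := h.apply_le_VdualNorm (z := ‖ι z‖⁻¹ • z) (by
      rw [map_smul, norm_smul, norm_inv, norm_norm, inv_mul_cancel₀ hz.ne'])
    rwa [map_smul, smul_eq_mul, inv_mul_le_iff₀ hz, mul_comm] at this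

theorem VdualNorm_le {M : ℝ} (hM : 0 ≤ M) (h : ∀ z, ξ z ≤ M * ‖ι z‖) : VdualNorm ι ξ ≤ M := by
  refine csSup_le ⟨0, 0, by simp, by simp⟩ ?_
  rintro _ ⟨z, hz, rfl⟩
  exact (h z).trans (mul_le_of_le_one_right hM hz)

end VdualNorm

section Conjugate

variable {R : Z → EReal} {ι : Z →L[ℝ] V} {τ : ℝ} {η : Z →L[ℝ] ℝ}

theorem mem_subdiffE_zero_iff (hR0 : R 0 = 0) {w : Z →L[ℝ] ℝ} :
    w ∈ subdiffE R 0 ↔ ∀ v, (w v : EReal) ≤ R v := by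
  simp [subdiffE, hR0]

theorem conjE_add_indic (hR : ∀ v, R v ≠ ⊥) :
    conjE (fun v => R v + indic ι τ v) η = ⨆ (v) (_ : ‖ι v‖ ≤ τ), (η v : EReal) - R v := by
  refine iSup_congr fun v => ?_
  by_cases hv : ‖ι v‖ ≤ τ
  · simp [indic, hv]
  · simp [indic, hv, EReal.add_top_of_ne_bot (hR v)]

theorem iSup_sub_le_mul_VdualNorm {w : Z →L[ℝ] ℝ} (hw : ∀ v, (w v : EReal) ≤ R v)
    (hξ : InVdual ι (η - w)) :
    ⨆ (v) (_ : ‖ι v‖ ≤ τ), (η v : EReal) - R v ≤ τ * VdualNorm ι (η - w) := by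
  refine iSup₂_le fun v hv => ?_
  calc (η v : EReal) - R v ≤ η v - w v := EReal.sub_le_sub le_rfl (hw v)
    _ = ((η - w) v : ℝ) := by simp [EReal.coe_sub]
    _ ≤ (τ * VdualNorm ι (η - w) : ℝ) := by
        rw [EReal.coe_le_coe_iff, mul_comm]
        exact (hξ.apply_le_VdualNorm_mul v).trans
          (mul_le_mul_of_nonneg_left hv hξ.VdualNorm_nonneg)
    _ = τ * VdualNorm ι (η - w) := EReal.coe_mul _ _

theorem coe_sub_div_mul_norm_le_of_forall_sub_le (hR : ∀ v, 0 ≤ R v)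
    (hRhom : ∀ (v : Z) (l : ℝ), 0 < l → R (l • v) = (l : EReal) * R v) (hτ : 0 < τ) {c : ℝ}
    (hc0 : 0 ≤ c) (hc : ∀ v, ‖ι v‖ ≤ τ → (η v : EReal) - R v ≤ c) (v : Z) :
    ((η v - c / τ * ‖ι v‖ : ℝ) : EReal) ≤ R v := by
  rcases eq_or_ne (R v) ⊤ with h | h
  · simp [h]
  have hRv : R v = (R v).toReal :=
    (EReal.coe_toReal h (ne_bot_of_le_ne_bot EReal.zero_ne_bot (hR v))).symm
  rw [hRv, EReal.coe_le_coe_iff, sub_le_comm]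
  refine le_div_mul_of_forall_mul_le hc0 hτ (norm_nonneg _) fun l hl hlτ => ?_
  have := hc (l • v) (by rwa [map_smul, norm_smul, Real.norm_of_nonneg hl.le])
  rw [hRhom v l hl, hRv, map_smul, smul_eq_mul, ← EReal.coe_mul, ← EReal.coe_sub,
    EReal.coe_le_coe_iff] at this
  linarith

theorem exists_VdualNorm_sub_le_of_forall_sub_le (hR : ∀ v, 0 ≤ R v) (hR0 : R 0 = 0)
    (hRadd : ∀ a b, R (a + b) ≤ R a + R b)
    (hRhom : ∀ (v : Z) (l : ℝ), 0 < l → R (l • v) = (l : EReal) * R v) (hτ : 0 < τ) {c : ℝ}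
    (hc : ∀ v, ‖ι v‖ ≤ τ → (η v : EReal) - R v ≤ c) :
    ∃ w : Z →L[ℝ] ℝ, (∀ v, (w v : EReal) ≤ R v) ∧ InVdual ι (η - w) ∧
      VdualNorm ι (η - w) ≤ c / τ := by
  have hc0 : 0 ≤ c := by simpa [hR0] using hc 0 (by simpa using hτ.le)
  set q : Z → ℝ := fun v => c / τ * ‖ι v‖
  have hcτ : 0 ≤ c / τ := div_nonneg hc0 hτ.le
  obtain ⟨g, hgR, hgq⟩ := exists_linearMap_le_of_sublinear (p := fun v => q v + η v) hR0 hRadd hRhom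
    (fun a b => by
      simp only [q, map_add]
      nlinarith [norm_add_le (ι a) (ι b)])
    (fun v l hl => by
      simp only [q, map_smul, norm_smul, Real.norm_of_nonneg hl.le, smul_eq_mul]
      ring)
    (fun v => by
      convert coe_sub_div_mul_norm_le_of_forall_sub_le hR hRhom hτ hc0 hc v using 2
      simp only [q, map_neg, norm_neg]
      ring)
  have hgabs : ∀ v, |η v - g v| ≤ q v := fun v => by
    have := hgq (-v)
    simp only [q, map_neg, norm_neg] at this
    exact abs_le.2 ⟨by linarith [hgq v], by linarith⟩
  -- `g` is only known to be linear, but `η - g` is dominated by `q`, hence continuous.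
  let D : Z →L[ℝ] ℝ := ((η : Z →ₗ[ℝ] ℝ) - g).mkContinuous (c / τ * ‖ι‖) fun v =>
    (hgabs v).trans (by rw [mul_assoc]; exact mul_le_mul_of_nonneg_left (ι.le_opNorm v) hcτ)
  have hD : η - (η - D) = D := sub_sub_cancel η D
  refine ⟨η - D, fun v => ?_, ⟨c / τ, fun z => by rw [hD]; exact hgabs z⟩,
    VdualNorm_le hcτ fun z => ?_⟩
  · simpa [D] using hgR v
  · rw [hD]
    exact (le_abs_self _).trans (hgabs z)

end Conjugate

theorem stmt7_general
    (ι : Z →L[ℝ] V)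
    (τ : ℝ) (hτ : 0 < τ)
    (R : Z → EReal) (hR0 : ∀ v : Z, 0 ≤ R v) (hRproper : ∃ v : Z, R v ≠ ⊤)
    (hRconvex : ∀ x y : Z, ∀ a b : ℝ, 0 ≤ a → 0 ≤ b → a + b = 1 →
      R (a • x + b • y) ≤ (a : EReal) * R x + (b : EReal) * R y)
    (hRlsc : LowerSemicontinuous R)
    (hRhom : ∀ (v : Z) (l : ℝ), 0 < l → R (l • v) = (l : EReal) * R v)
    (η : Z →L[ℝ] ℝ) :
    conjE (fun v => R v + indic ι τ v) η = (τ : EReal) * distVdual ι η (subdiffE R 0) := by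
  have hRzero := apply_zero_eq_zero_of_homogeneous hR0 hRproper hRlsc hRhom
  have hτE : (0 : EReal) < τ := EReal.coe_pos.2 hτ
  rw [conjE_add_indic fun v => ne_bot_of_le_ne_bot EReal.zero_ne_bot (hR0 v), distVdual]
  simp only [mem_subdiffE_zero_iff hRzero]
  set c := ⨆ (v) (_ : ‖ι v‖ ≤ τ), (η v : EReal) - R v
  have hle_c : ∀ v, ‖ι v‖ ≤ τ → (η v : EReal) - R v ≤ c := fun v hv =>
    le_iSup₂_of_le (f := fun v (_ : ‖ι v‖ ≤ τ) => (η v : EReal) - R v) v hv le_rfl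
  apply le_antisymm
  · rw [← EReal.div_le_iff_le_mul hτE (EReal.coe_ne_top τ)]
    refine le_sInf ?_
    rintro _ ⟨w, hw, hξ, rfl⟩
    rw [EReal.div_le_iff_le_mul hτE (EReal.coe_ne_top τ)]
    exact iSup_sub_le_mul_VdualNorm hw hξ
  rcases eq_or_ne c ⊤ with hctop | hctop
  · exact hctop ▸ le_top
  have hc0 : 0 ≤ c := by simpa [hRzero] using hle_c 0 (by simpa using hτ.le)
  obtain ⟨c', hc'⟩ : ∃ c' : ℝ, c = c' :=
    ⟨c.toReal, (EReal.coe_toReal hctop (ne_bot_of_le_ne_bot EReal.zero_ne_bot hc0)).symm⟩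
  obtain ⟨w, hw, hξ, hle⟩ := exists_VdualNorm_sub_le_of_forall_sub_le hR0 hRzero
    (apply_add_le_of_convex_of_homogeneous hR0 hRconvex hRhom) hRhom hτ
    fun v hv => (hle_c v hv).trans hc'.le
  refine (mul_le_mul_of_nonneg_left (sInf_le (a := (VdualNorm ι (η - w) : EReal)) ?_)
    hτE.le).trans ?_
  · exact ⟨w, hw, hξ, rfl⟩
  rw [hc', ← EReal.coe_mul, EReal.coe_le_coe_iff]
  exact (le_div_iff₀' hτ).1 hle

/-- Let `Z` be a real reflexive Banach space continuously and densely embedded in a real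
Banach space `V` (via `ι`), `τ > 0`, and let `R : Z → [0,∞]` be proper, convex, lower
semicontinuous and positively 1-homogeneous. Then for every `η ∈ Z*` the Fenchel conjugate
of `R + I_τ` satisfies `(R + I_τ)*(η) = τ · dist_{V*}(η, ∂R(0))`. -/
theorem stmt7 [CompleteSpace Z] [CompleteSpace V]
    (hreflZ : Function.Surjective ⇑(NormedSpace.inclusionInDoubleDual ℝ Z))
    (ι : Z →L[ℝ] V) (hinj : Function.Injective ι) (hdense : DenseRange ι)
    (τ : ℝ) (hτ : 0 < τ)
    (R : Z → EReal) (hR0 : ∀ v : Z, 0 ≤ R v) (hRproper : ∃ v : Z, R v ≠ ⊤)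
    (hRconvex : ∀ x y : Z, ∀ a b : ℝ, 0 ≤ a → 0 ≤ b → a + b = 1 →
      R (a • x + b • y) ≤ (a : EReal) * R x + (b : EReal) * R y)
    (hRlsc : LowerSemicontinuous R)
    (hRhom : ∀ (v : Z) (l : ℝ), 0 < l → R (l • v) = (l : EReal) * R v)
    (η : Z →L[ℝ] ℝ) :
    conjE (fun v => R v + indic ι τ v) η = (τ : EReal) * distVdual ι η (subdiffE R 0) :=
  stmt7_general ι τ hτ R hR0 hRproper hRconvex hRlsc hRhom η
end

section
/- Let Z, V, X be real Banach spaces with Z compactly embedded in V and V continuously embedded in X, let T > 0, α > 0, κ > 0, and let I : [0,T] × Z → ℝ be Gateaux differentiable in z with derivative D_zI(t,z) ∈ Z*. Assume: (a) the Gårding-like inequality: for every ρ > 0 there is c(ρ) ≥ 0 with ⟨D_zI(t,z₁) − D_zI(t,z₂), z₁ − z₂⟩ ≥ α‖z₁ − z₂‖_Z² − c(ρ)‖z₁ − z₂‖_V² for all t ∈ [0,T] and all z₁, z₂ ∈ Z with ‖z₁‖_Z, ‖z₂‖_Z ≤ ρ; (b) the time-Lipschitz estimate: for every ρ > 0 there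 is C(ρ) ≥ 0 with ⟨D_zI(t,z) − D_zI(s,z), v⟩ ≤ C(ρ)|t − s|·‖v‖_Z for all t, s ∈ [0,T], all z with ‖z‖_Z ≤ ρ and all v ∈ Z; and (c) R : Z → [0,∞] satisfies κ‖v‖_X ≤ R(v) for all v ∈ Z. Then for every ρ > 0 there exist constants C₁(ρ), C₂(ρ) > 0 such that ⟨D_zI(t,v) − D_zI(s,w), v − w⟩ ≥ (α/2)‖v − w‖_Z² − C₁(ρ)·‖v − w‖_V·R(v − w) − C₂(ρ)·(t − s)² for all v, w ∈ Z with ‖v‖_Z, ‖w‖_Z ≤ ρ and all t, s ∈ [0,T]. -/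
open Set

/-!
The compact embedding `Z ↪ V` together with the injectivity of `V ↪ X` gives Ehrling's
inequality `‖z‖_V ≤ ε‖z‖_Z + C_ε‖z‖_X`, hence `‖z‖_V² ≤ δ‖z‖_Z² + C_δ‖z‖_V‖z‖_X`; inserted in
the Gårding inequality this absorbs the `c(ρ)‖z‖_V²` term into a quarter of `α‖z‖_Z²`. The change
of time is paid by the time-Lipschitz estimate, and Young's inequality trades
`C(ρ)|t - s|‖v - w‖_Z` for another quarter of `α‖v - w‖_Z²` plus a multiple of `(t - s)²`.
Finally `κ‖z‖_X ≤ R(z)` replaces the `X`-norm by `R`.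
-/

theorem IsCompact.exists_norm_le_add_mul_norm {V X : Type*} [NormedAddCommGroup V]
    [NormedAddCommGroup X] {K : Set V} (hK : IsCompact K) {g : V → X} (hg : Continuous g)
    (hg0 : ∀ y, g y = 0 → y = 0) {ε : ℝ} (hε : 0 < ε) :
    ∃ C, 0 ≤ C ∧ ∀ y ∈ K, ‖y‖ ≤ ε + C * ‖g y‖ := by
  -- `‖g‖` attains a positive minimum on the compact set where `ε ≤ ‖y‖`.
  set K' := K ∩ {y | ε ≤ ‖y‖}
  rcases K'.eq_empty_or_nonempty with hempty | hne
  · refine ⟨0, le_rfl, fun y hy => ?_⟩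
    have hy' : y ∉ K' := by simp [hempty]
    simp only [K', mem_inter_iff, mem_ofPred_eq, not_and, not_le] at hy'
    linarith [hy' hy]
  have hK' : IsCompact K' := hK.inter_right (isClosed_le continuous_const continuous_norm)
  obtain ⟨y₀, hy₀, hmin⟩ := hK'.exists_isMinOn hne (continuous_norm.comp hg).continuousOn
  obtain ⟨M, hM⟩ := hK.isBounded.exists_norm_le
  have hgy₀ : 0 < ‖g y₀‖ := by
    refine norm_pos_iff.2 fun h => ?_
    have := hy₀.2
    simp only [mem_ofPred_eq, hg0 _ h, norm_zero] at this
    linarith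
  have hM0 : 0 ≤ M := (norm_nonneg _).trans (hM _ hy₀.1)
  refine ⟨M / ‖g y₀‖, by positivity, fun y hy => ?_⟩
  by_cases hyε : ‖y‖ < ε
  · nlinarith [norm_nonneg (g y), div_nonneg hM0 hgy₀.le]
  have hgy : ‖g y₀‖ ≤ ‖g y‖ := hmin ⟨hy, not_lt.1 hyε⟩
  calc ‖y‖ ≤ M / ‖g y₀‖ * ‖g y₀‖ := by rw [div_mul_cancel₀ _ hgy₀.ne']; exact hM y hy
    _ ≤ M / ‖g y₀‖ * ‖g y‖ := by gcongr
    _ ≤ ε + M / ‖g y₀‖ * ‖g y‖ := by linarith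

section Ehrling

variable {Z V X : Type*} [NormedAddCommGroup Z] [NormedSpace ℝ Z] [NormedAddCommGroup V]
  [NormedSpace ℝ V] [NormedAddCommGroup X] [NormedSpace ℝ X]
  (ι : Z →L[ℝ] V) (hι : IsCompact (closure (ι '' Metric.closedBall 0 1)))
  (ιX : V →L[ℝ] X) (hιX : Function.Injective ιX)
include hι hιX

theorem ehrling_inequality {ε : ℝ} (hε : 0 < ε) :
    ∃ C, 0 ≤ C ∧ ∀ z : Z, ‖ι z‖ ≤ ε * ‖z‖ + C * ‖ιX (ι z)‖ := by
  obtain ⟨C, hC0, hC⟩ := hι.exists_norm_le_add_mul_norm ιX.continuous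
    (fun y hy => hιX (by rw [hy, map_zero])) hε
  refine ⟨C, hC0, fun z => ?_⟩
  rcases eq_or_ne z 0 with rfl | hz
  · simp
  have hz' : 0 < ‖z‖ := norm_pos_iff.2 hz
  have hunit := hC _ (subset_closure ⟨‖z‖⁻¹ • z, by simp [norm_smul, hz], rfl⟩)
  simp only [map_smul, norm_smul, norm_inv, norm_norm] at hunit
  calc ‖ι z‖ = ‖z‖ * (‖z‖⁻¹ * ‖ι z‖) := by field_simp
    _ ≤ ‖z‖ * (ε + C * (‖z‖⁻¹ * ‖ιX (ι z)‖)) := by gcongr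
    _ = ε * ‖z‖ + C * ‖ιX (ι z)‖ := by field_simp

theorem ehrling_inequality_sq {δ : ℝ} (hδ : 0 < δ) :
    ∃ C, 0 ≤ C ∧ ∀ z : Z, ‖ι z‖ ^ 2 ≤ δ * ‖z‖ ^ 2 + C * (‖ι z‖ * ‖ιX (ι z)‖) := by
  obtain ⟨C, hC0, hC⟩ := ehrling_inequality ι hι ιX hιX (ε := δ / (‖ι‖ + 1)) (by positivity)
  refine ⟨C, hC0, fun z => ?_⟩
  have hιz : ‖ι z‖ ≤ (‖ι‖ + 1) * ‖z‖ := (ι.le_opNorm z).trans (by nlinarith [norm_nonneg z])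
  calc ‖ι z‖ ^ 2 ≤ ‖ι z‖ * (δ / (‖ι‖ + 1) * ‖z‖ + C * ‖ιX (ι z)‖) := by
        rw [sq]; exact mul_le_mul_of_nonneg_left (hC z) (norm_nonneg _)
    _ = δ / (‖ι‖ + 1) * ‖z‖ * ‖ι z‖ + C * (‖ι z‖ * ‖ιX (ι z)‖) := by ring
    _ ≤ δ / (‖ι‖ + 1) * ‖z‖ * ((‖ι‖ + 1) * ‖z‖) + C * (‖ι z‖ * ‖ιX (ι z)‖) := by gcongr
    _ = δ * ‖z‖ ^ 2 + C * (‖ι z‖ * ‖ιX (ι z)‖) := by field_simp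

end Ehrling

theorem mul_le_mul_sq_add_sq_div {α : ℝ} (hα : 0 < α) (x y : ℝ) :
    x * y ≤ α / 4 * x ^ 2 + y ^ 2 / α := by
  have h : α / 4 * x ^ 2 + y ^ 2 / α - x * y = (α * x - 2 * y) ^ 2 / (4 * α) := by
    field_simp; ring
  nlinarith [div_nonneg (sq_nonneg (α * x - 2 * y)) (by positivity : (0 : ℝ) ≤ 4 * α)]

theorem EReal.coe_sub_mul_sub_le_of_le {a β γ r x : ℝ} {R : EReal} (hβ : 0 ≤ β)
    (hr : (r : EReal) ≤ R) (h : a - β * r - γ ≤ x) :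
    (a : EReal) - β * R - γ ≤ x := by
  calc (a : EReal) - β * R - γ ≤ (a : EReal) - β * r - γ :=
        EReal.sub_le_sub (EReal.sub_le_sub le_rfl
          (mul_le_mul_of_nonneg_left hr (EReal.coe_nonneg.2 hβ))) le_rfl
    _ = ((a - β * r - γ : ℝ) : EReal) := by rw [EReal.coe_sub, EReal.coe_sub, EReal.coe_mul]
    _ ≤ x := EReal.coe_le_coe_iff.2 h

theorem stmt13_general
    {Z V X : Type*}
    [NormedAddCommGroup Z] [NormedSpace ℝ Z]
    [NormedAddCommGroup V] [NormedSpace ℝ V]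
    [NormedAddCommGroup X] [NormedSpace ℝ X]
    (ι : Z →L[ℝ] V)
    (hcompact : ∀ s : Set Z, Bornology.IsBounded s → IsCompact (closure (ι '' s)))
    (ιX : V →L[ℝ] X) (hinjX : Function.Injective ιX)
    (T α κ : ℝ) (hα : 0 < α) (hκ : 0 < κ)
    (DzI : ℝ → Z → (Z →L[ℝ] ℝ))
    (hGarding : ∀ ρ : ℝ, 0 < ρ → ∃ c : ℝ, 0 ≤ c ∧ ∀ t ∈ Icc (0:ℝ) T, ∀ z₁ z₂ : Z,
      ‖z₁‖ ≤ ρ → ‖z₂‖ ≤ ρ →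
      α * ‖z₁ - z₂‖ ^ 2 - c * ‖ι (z₁ - z₂)‖ ^ 2 ≤ (DzI t z₁ - DzI t z₂) (z₁ - z₂))
    (htLip : ∀ ρ : ℝ, 0 < ρ → ∃ C : ℝ, 0 ≤ C ∧ ∀ t ∈ Icc (0:ℝ) T, ∀ s ∈ Icc (0:ℝ) T,
      ∀ z : Z, ‖z‖ ≤ ρ → ∀ v : Z, (DzI t z - DzI s z) v ≤ C * |t - s| * ‖v‖)
    (R : Z → EReal)
    (hRlow : ∀ v : Z, ((κ * ‖ιX (ι v)‖ : ℝ) : EReal) ≤ R v) :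
    ∀ ρ : ℝ, 0 < ρ → ∃ C₁ C₂ : ℝ, 0 < C₁ ∧ 0 < C₂ ∧
      ∀ t ∈ Icc (0:ℝ) T, ∀ s ∈ Icc (0:ℝ) T, ∀ v w : Z, ‖v‖ ≤ ρ → ‖w‖ ≤ ρ →
        ((α / 2 * ‖v - w‖ ^ 2 : ℝ) : EReal)
            - ((C₁ * ‖ι (v - w)‖ : ℝ) : EReal) * R (v - w)
            - ((C₂ * (t - s) ^ 2 : ℝ) : EReal)
          ≤ (((DzI t v - DzI s w) (v - w) : ℝ) : EReal) := by
  intro ρ hρ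
  obtain ⟨c, hc, hG⟩ := hGarding ρ hρ
  obtain ⟨L, hL0, hL⟩ := htLip ρ hρ
  obtain ⟨K, hK0, hK⟩ := ehrling_inequality_sq ι (hcompact _ Metric.isBounded_closedBall) ιX
    hinjX (δ := α / (4 * (c + 1))) (by positivity)
  refine ⟨c * K / κ + 1, L ^ 2 / α + 1, by positivity, by positivity,
    fun t ht s hs v w hv hw => EReal.coe_sub_mul_sub_le_of_le (by positivity) (hRlow _) ?_⟩
  have hcδ : c * (α / (4 * (c + 1))) ≤ α / 4 := by
    rw [mul_div_assoc', div_le_div_iff₀ (by positivity) (by norm_num)]; nlinarith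
  have hspace := hG t ht v w hv hw
  have htime := hL s hs t ht w hw (v - w)
  have hyoung := mul_le_mul_sq_add_sq_div hα ‖v - w‖ (L * |s - t|)
  have habsorb := mul_le_mul_of_nonneg_left (hK (v - w)) hc
  have hsplit : (DzI t v - DzI s w) (v - w)
      = (DzI t v - DzI t w) (v - w) - (DzI s w - DzI t w) (v - w) := by
    simp only [sub_apply]; ring
  have hC₁ : (c * K / κ + 1) * ‖ι (v - w)‖ * (κ * ‖ιX (ι (v - w))‖)
      = c * K * (‖ι (v - w)‖ * ‖ιX (ι (v - w))‖) + κ * ‖ι (v - w)‖ * ‖ιX (ι (v - w))‖ := by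
    field_simp
  rw [mul_pow, sq_abs, sub_sq_comm s t, mul_div_right_comm] at hyoung
  rw [hsplit, hC₁]
  nlinarith [mul_le_mul_of_nonneg_right hcδ (sq_nonneg ‖v - w‖), sq_nonneg (t - s),
    mul_nonneg (mul_nonneg hκ.le (norm_nonneg (ι (v - w)))) (norm_nonneg (ιX (ι (v - w))))]

/-- **Combined Gårding-type estimate.** Let `Z, V, X` be real Banach spaces with `Z`
compactly embedded in `V` (via `ι`) and `V` continuously embedded in `X` (via `ιX`),
`T > 0`, `α > 0`, `κ > 0`, and let `I : [0,T] × Z → ℝ` be Gateaux differentiable in `z`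
with derivative `DzI(t,z) ∈ Z*`. Assume (a) the Gårding-like inequality, (b) the
time-Lipschitz estimate, and (c) `κ‖v‖_X ≤ R(v)` for all `v ∈ Z`. Then for every `ρ > 0`
there exist `C₁(ρ), C₂(ρ) > 0` with
`⟨DzI(t,v) − DzI(s,w), v − w⟩ ≥ (α/2)‖v − w‖_Z² − C₁(ρ)‖v − w‖_V·R(v − w) − C₂(ρ)(t − s)²`
for all `v, w` in the closed `ρ`-ball of `Z` and all `t, s ∈ [0,T]`. -/
theorem stmt13
    {Z V X : Type*}
    [NormedAddCommGroup Z] [NormedSpace ℝ Z] [CompleteSpace Z]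
    [NormedAddCommGroup V] [NormedSpace ℝ V] [CompleteSpace V]
    [NormedAddCommGroup X] [NormedSpace ℝ X] [CompleteSpace X]
    (ι : Z →L[ℝ] V) (hinj : Function.Injective ι)
    (hcompact : ∀ s : Set Z, Bornology.IsBounded s → IsCompact (closure (ι '' s)))
    (ιX : V →L[ℝ] X) (hinjX : Function.Injective ιX)
    (T α κ : ℝ) (hT : 0 < T) (hα : 0 < α) (hκ : 0 < κ)
    (I : ℝ → Z → ℝ) (DzI : ℝ → Z → (Z →L[ℝ] ℝ))
    (hGateaux : ∀ t ∈ Icc (0:ℝ) T, ∀ z v : Z,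
      HasDerivAt (fun ε : ℝ => I t (z + ε • v)) (DzI t z v) 0)
    (hGarding : ∀ ρ : ℝ, 0 < ρ → ∃ c : ℝ, 0 ≤ c ∧ ∀ t ∈ Icc (0:ℝ) T, ∀ z₁ z₂ : Z,
      ‖z₁‖ ≤ ρ → ‖z₂‖ ≤ ρ →
      α * ‖z₁ - z₂‖ ^ 2 - c * ‖ι (z₁ - z₂)‖ ^ 2 ≤ (DzI t z₁ - DzI t z₂) (z₁ - z₂))
    (htLip : ∀ ρ : ℝ, 0 < ρ → ∃ C : ℝ, 0 ≤ C ∧ ∀ t ∈ Icc (0:ℝ) T, ∀ s ∈ Icc (0:ℝ) T,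
      ∀ z : Z, ‖z‖ ≤ ρ → ∀ v : Z, (DzI t z - DzI s z) v ≤ C * |t - s| * ‖v‖)
    (R : Z → EReal) (hR0 : ∀ v : Z, 0 ≤ R v)
    (hRlow : ∀ v : Z, ((κ * ‖ιX (ι v)‖ : ℝ) : EReal) ≤ R v) :
    ∀ ρ : ℝ, 0 < ρ → ∃ C₁ C₂ : ℝ, 0 < C₁ ∧ 0 < C₂ ∧
      ∀ t ∈ Icc (0:ℝ) T, ∀ s ∈ Icc (0:ℝ) T, ∀ v w : Z, ‖v‖ ≤ ρ → ‖w‖ ≤ ρ →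
        ((α / 2 * ‖v - w‖ ^ 2 : ℝ) : EReal)
            - ((C₁ * ‖ι (v - w)‖ : ℝ) : EReal) * R (v - w)
            - ((C₂ * (t - s) ^ 2 : ℝ) : EReal)
          ≤ (((DzI t v - DzI s w) (v - w) : ℝ) : EReal) :=
  stmt13_general ι hcompact ιX hinjX T α κ hα hκ DzI hGarding htLip R hRlow
end

section
/- Let Z and V be real Banach spaces with Z continuously embedded in V, T > 0, τ ∈ (0,T], β > 0, c₀, c₁ > 0, μ ∈ L¹(0,T) nonnegative, and I : [0,T] × Z → ℝ continuously differentiable with I(t,z) ≥ c₁‖z‖_Z − c₀ and |∂_t I(t,z)| ≤ μ(t)(I(t,z) + β) for all t ∈ [0,T], z ∈ Z. Let R : Z → [0,∞], and let z₀, z₁, z₂, … ∈ Z and 0 = t₀ ≤ t₁ ≤ t₂ ≤ … ≤ T satisfy, for all k ≥ 1, t_k = t_{k−1} + τ − ‖z_k − z_{k−1}‖_V and the energy decrease I(t_{k−1}, z_k) + R(z_k − z_{k−1}) ≤ I(t_{k−1}, z_{k−1}). Then for every k: I(t_k, z_k) + Σ_{i=1}^{k} R(z_i − z_{i−1}) ≤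 (β + I(0, z₀))·exp(∫_0^T μ(s) ds), and in particular ‖z_k‖_Z ≤ (c₀ + (β + I(0, z₀))·exp(∫_0^T μ(s) ds))/c₁. -/
/-!
Along the time variable, `g s = I s z + β` satisfies `|g'| ≤ μ g`. Where `g < 0` this forces
`μ = 0` and `g' ≤ 0`, so a negative `g` stays negative, does not increase and carries no weight.
Otherwise `log (g² + ε)` has derivative `2 g g' / (g² + ε) ≤ 2 μ`, which yields the Gronwall bound
`g b ≤ g a * exp (∫ a..b, μ)` without differentiating the primitive of the merely integrable `μ`.
Each step of the scheme lowers energy plus dissipation at the frozen time `t k`, then advances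
time to `t (k + 1)` at the cost of a factor `exp (∫ μ) ≥ 1`; these factors multiply to
`exp (∫ 0..T, μ)`. Coercivity turns the energy bound into the norm bound.
-/

open Set MeasureTheory

theorem EReal.coe_finset_sum {ι : Type*} (s : Finset ι) (f : ι → ℝ) :
    ((∑ i ∈ s, f i : ℝ) : EReal) = ∑ i ∈ s, (f i : EReal) :=
  map_sum (⟨⟨(↑), EReal.coe_zero⟩, EReal.coe_add⟩ : ℝ →+ EReal) f s

theorem EReal.coe_toReal_of_coe_add_le {x y : ℝ} {r : EReal} (hr : 0 ≤ r)
    (h : (x : EReal) + r ≤ y) : (r.toReal : EReal) = r := by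
  refine EReal.coe_toReal (fun htop => ?_) (ne_bot_of_le_ne_bot EReal.zero_ne_bot hr)
  rw [htop, EReal.add_top_of_ne_bot (EReal.coe_ne_bot x), top_le_iff] at h
  exact EReal.coe_ne_top y h

theorem add_sum_le_mul_exp_sum {u v r m : ℕ → ℝ} (hr : ∀ k, 0 ≤ r k) (hm : ∀ k, 0 ≤ m k)
    (hstep : ∀ k, u (k + 1) ≤ v k * Real.exp (m k)) (hdec : ∀ k, v k + r k ≤ u k) (k : ℕ) :
    u k + ∑ i ∈ Finset.range k, r i ≤ u 0 * Real.exp (∑ i ∈ Finset.range k, m i) := by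
  induction k with
  | zero => simp
  | succ k ih =>
    have hS : 0 ≤ ∑ i ∈ Finset.range k, r i + r k :=
      add_nonneg (Finset.sum_nonneg fun i _ => hr i) (hr k)
    rw [Finset.sum_range_succ, Finset.sum_range_succ, Real.exp_add, ← mul_assoc]
    calc u (k + 1) + (∑ i ∈ Finset.range k, r i + r k)
        ≤ v k * Real.exp (m k) + (∑ i ∈ Finset.range k, r i + r k) * Real.exp (m k) :=
          add_le_add (hstep k) (le_mul_of_one_le_right hS (Real.one_le_exp (hm k)))
      _ = (v k + r k + ∑ i ∈ Finset.range k, r i) * Real.exp (m k) := by ring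
      _ ≤ _ := by gcongr; linarith [hdec k]

theorem mul_le_mul_sq_of_abs_le_mul {x d m : ℝ} (hm : 0 ≤ m) (hd : |d| ≤ m * x) :
    x * d ≤ m * x ^ 2 := by
  rcases le_or_gt 0 x with hx | hx
  · nlinarith [le_abs_self d]
  · nlinarith [neg_abs_le d]

section Gronwall

variable {a b : ℝ} {μ g g' : ℝ → ℝ}

theorem neg_of_abs_deriv_le_mul_of_neg
    (hg : ∀ x ∈ Icc a b, HasDerivWithinAt g (g' x) (Icc a b) x)
    (hμ0 : ∀ x ∈ Icc a b, 0 ≤ μ x) (hb : ∀ x ∈ Icc a b, |g' x| ≤ μ x * g x)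
    (ha : g a < 0) : ∀ x ∈ Icc a b, g x < 0 := by
  have hB : ∀ x, HasDerivAt (fun x => g a * Real.exp (a - x))
      (-(g a * Real.exp (a - x))) x := fun x => by
    simpa using (((hasDerivAt_id x).const_sub a).exp).const_mul (g a)
  -- where `g` touches this increasing negative barrier, `g' ≤ μ g ≤ 0` lies below its slope
  have hfence : ∀ x ∈ Icc a b, g x ≤ g a * Real.exp (a - x) := by
    refine image_le_of_deriv_right_lt_deriv_boundary' (fun x hx => (hg x hx).continuousWithinAt)
      (fun x hx => (hg x (Ico_subset_Icc_self hx)).mono_of_mem_nhdsWithin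
        (Icc_mem_nhdsGE_of_mem hx)) (by simp)
      (fun x _ => (hB x).continuousAt.continuousWithinAt) (fun x _ => (hB x).hasDerivWithinAt) ?_
    intro x hx hgx
    have hx' := Ico_subset_Icc_self hx
    have hneg : g a * Real.exp (a - x) < 0 := mul_neg_of_neg_of_pos ha (Real.exp_pos _)
    nlinarith [le_abs_self (g' x), hb x hx', hμ0 x hx']
  exact fun x hx => (hfence x hx).trans_lt (mul_neg_of_neg_of_pos ha (Real.exp_pos _))

theorem eq_zero_of_abs_deriv_le_mul_of_neg
    (hg : ∀ x ∈ Icc a b, HasDerivWithinAt g (g' x) (Icc a b) x)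
    (hμ0 : ∀ x ∈ Icc a b, 0 ≤ μ x) (hb : ∀ x ∈ Icc a b, |g' x| ≤ μ x * g x)
    (ha : g a < 0) : ∀ x ∈ Icc a b, μ x = 0 := fun x hx => by
  have hgx := neg_of_abs_deriv_le_mul_of_neg hg hμ0 hb ha x hx
  nlinarith [abs_nonneg (g' x), hb x hx, hμ0 x hx]

theorem le_of_abs_deriv_le_mul_of_neg
    (hg : ∀ x ∈ Icc a b, HasDerivWithinAt g (g' x) (Icc a b) x)
    (hμ0 : ∀ x ∈ Icc a b, 0 ≤ μ x) (hb : ∀ x ∈ Icc a b, |g' x| ≤ μ x * g x)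
    (hab : a ≤ b) (ha : g a < 0) : g b ≤ g a := by
  have hμ := eq_zero_of_abs_deriv_le_mul_of_neg hg hμ0 hb ha
  refine image_le_of_deriv_right_le_deriv_boundary (fun x hx => (hg x hx).continuousWithinAt)
    (fun x hx => (hg x (Ico_subset_Icc_self hx)).mono_of_mem_nhdsWithin
      (Icc_mem_nhdsGE_of_mem hx)) (B := fun _ => g a) le_rfl continuousOn_const
    (fun x _ => hasDerivWithinAt_const x _ (g a)) (fun x hx => ?_) (right_mem_Icc.2 hab)
  have hx := Ico_subset_Icc_self hx
  simpa [hμ x hx] using (le_abs_self (g' x)).trans (hb x hx)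

theorem sq_add_le_mul_exp_integral
    (hg : ∀ x ∈ Icc a b, HasDerivWithinAt g (g' x) (Icc a b) x)
    (hg' : ContinuousOn g' (Icc a b)) (hμ : IntegrableOn μ (Icc a b))
    (hμ0 : ∀ x ∈ Icc a b, 0 ≤ μ x) (hb : ∀ x ∈ Icc a b, |g' x| ≤ μ x * g x)
    (hab : a ≤ b) {ε : ℝ} (hε : 0 < ε) :
    g b ^ 2 + ε ≤ (g a ^ 2 + ε) * Real.exp (2 * ∫ x in a..b, μ x) := by
  have hgc : ContinuousOn g (Icc a b) := fun x hx => (hg x hx).continuousWithinAt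
  have hpos : ∀ x, 0 < g x ^ 2 + ε := fun x => by positivity
  have hint : IntervalIntegrable (fun x => 2 * g x * g' x / (g x ^ 2 + ε)) volume a b :=
    ContinuousOn.intervalIntegrable_of_Icc hab
      (((continuousOn_const.mul hgc).mul hg').div ((hgc.pow 2).add continuousOn_const)
        fun x _ => (hpos x).ne')
  have hftc : ∫ x in a..b, 2 * g x * g' x / (g x ^ 2 + ε)
      = Real.log (g b ^ 2 + ε) - Real.log (g a ^ 2 + ε) := by
    refine intervalIntegral.integral_eq_sub_of_hasDerivAt_of_le hab
      (((hgc.pow 2).add continuousOn_const).log fun x _ => (hpos x).ne') (fun x hx => ?_) hint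
    have hgx := (hg x (Ioo_subset_Icc_self hx)).hasDerivAt (Icc_mem_nhds hx.1 hx.2)
    have hsq : HasDerivAt (fun y => g y ^ 2 + ε) (2 * g x * g' x) x := by
      simpa using (hgx.pow 2).add_const ε
    exact hsq.log (hpos x).ne'
  have hlog : Real.log (g b ^ 2 + ε) - Real.log (g a ^ 2 + ε) ≤ ∫ x in a..b, 2 * μ x := by
    rw [← hftc]
    refine intervalIntegral.integral_mono_on hab hint
      (((intervalIntegrable_iff_integrableOn_Icc_of_le hab).2 hμ).const_mul 2) ?_
    intro x hx
    rw [div_le_iff₀ (hpos x)]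
    nlinarith [mul_le_mul_sq_of_abs_le_mul (hμ0 x hx) (hb x hx), hμ0 x hx]
  rw [intervalIntegral.integral_const_mul] at hlog
  calc g b ^ 2 + ε = Real.exp (Real.log (g b ^ 2 + ε)) := (Real.exp_log (hpos b)).symm
    _ ≤ Real.exp (Real.log (g a ^ 2 + ε) + 2 * ∫ x in a..b, μ x) :=
        Real.exp_le_exp.2 (by linarith)
    _ = _ := by rw [Real.exp_add, Real.exp_log (hpos a)]

theorem abs_le_abs_mul_exp_integral
    (hg : ∀ x ∈ Icc a b, HasDerivWithinAt g (g' x) (Icc a b) x)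
    (hg' : ContinuousOn g' (Icc a b)) (hμ : IntegrableOn μ (Icc a b))
    (hμ0 : ∀ x ∈ Icc a b, 0 ≤ μ x) (hb : ∀ x ∈ Icc a b, |g' x| ≤ μ x * g x)
    (hab : a ≤ b) : |g b| ≤ |g a| * Real.exp (∫ x in a..b, μ x) := by
  have hE : 0 < Real.exp (2 * ∫ x in a..b, μ x) := Real.exp_pos _
  have hsq : g b ^ 2 ≤ g a ^ 2 * Real.exp (2 * ∫ x in a..b, μ x) :=
    le_of_forall_pos_le_add fun δ hδ => by
      have := sq_add_le_mul_exp_integral hg hg' hμ hμ0 hb hab (div_pos hδ hE)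
      rw [add_mul, div_mul_cancel₀ δ hE.ne'] at this
      linarith [div_pos hδ hE]
  have hexp : g a ^ 2 * Real.exp (2 * ∫ x in a..b, μ x)
      = (|g a| * Real.exp (∫ x in a..b, μ x)) ^ 2 := by
    rw [mul_pow, sq_abs, ← Real.exp_nat_mul]
    norm_num
  exact (sq_le_sq₀ (abs_nonneg _) (by positivity)).1 (by rwa [sq_abs, ← hexp])

theorem integral_eq_zero_of_abs_deriv_le_mul_of_neg
    (hg : ∀ x ∈ Icc a b, HasDerivWithinAt g (g' x) (Icc a b) x)
    (hμ0 : ∀ x ∈ Icc a b, 0 ≤ μ x) (hb : ∀ x ∈ Icc a b, |g' x| ≤ μ x * g x)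
    (ha : g a < 0) {c : ℝ} (hc : c ∈ Icc a b) : ∫ x in a..c, μ x = 0 := by
  rw [intervalIntegral.integral_congr (g := fun _ => 0) fun x hx => ?_,
    intervalIntegral.integral_zero]
  rw [uIcc_of_le hc.1] at hx
  exact eq_zero_of_abs_deriv_le_mul_of_neg hg hμ0 hb ha x ⟨hx.1, hx.2.trans hc.2⟩

theorem le_mul_exp_integral_of_abs_deriv_le_mul
    (hg : ∀ x ∈ Icc a b, HasDerivWithinAt g (g' x) (Icc a b) x)
    (hg' : ContinuousOn g' (Icc a b)) (hμ : IntegrableOn μ (Icc a b))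
    (hμ0 : ∀ x ∈ Icc a b, 0 ≤ μ x) (hb : ∀ x ∈ Icc a b, |g' x| ≤ μ x * g x)
    (hab : a ≤ b) : g b ≤ g a * Real.exp (∫ x in a..b, μ x) := by
  rcases le_or_gt 0 (g a) with ha | ha
  · calc g b ≤ |g b| := le_abs_self _
      _ ≤ |g a| * Real.exp (∫ x in a..b, μ x) := abs_le_abs_mul_exp_integral hg hg' hμ hμ0 hb hab
      _ = _ := by rw [abs_of_nonneg ha]
  · rw [integral_eq_zero_of_abs_deriv_le_mul_of_neg hg hμ0 hb ha (right_mem_Icc.2 hab),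
      Real.exp_zero, mul_one]
    exact le_of_abs_deriv_le_mul_of_neg hg hμ0 hb hab ha

theorem mul_exp_integral_le_of_abs_deriv_le_mul
    (hg : ∀ x ∈ Icc a b, HasDerivWithinAt g (g' x) (Icc a b) x) (hμ : IntegrableOn μ (Icc a b))
    (hμ0 : ∀ x ∈ Icc a b, 0 ≤ μ x) (hb : ∀ x ∈ Icc a b, |g' x| ≤ μ x * g x)
    {c : ℝ} (hc : c ∈ Icc a b) :
    g a * Real.exp (∫ x in a..c, μ x) ≤ g a * Real.exp (∫ x in a..b, μ x) := by
  rcases le_or_gt 0 (g a) with ha | ha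
  · refine mul_le_mul_of_nonneg_left (Real.exp_le_exp.2 ?_) ha
    exact intervalIntegral.integral_mono_interval le_rfl hc.1 hc.2
      (ae_restrict_of_forall_mem measurableSet_Ioc fun x hx => hμ0 x (Ioc_subset_Icc_self hx))
      ((intervalIntegrable_iff_integrableOn_Icc_of_le (hc.1.trans hc.2)).2 hμ)
  · rw [integral_eq_zero_of_abs_deriv_le_mul_of_neg hg hμ0 hb ha hc,
      integral_eq_zero_of_abs_deriv_le_mul_of_neg hg hμ0 hb ha (right_mem_Icc.2 (hc.1.trans hc.2))]

end Gronwall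

theorem add_sum_le_mul_exp_integral {Z : Type*} {T β : ℝ} {μ : ℝ → ℝ} {I dI : ℝ → Z → ℝ}
    {z : ℕ → Z} {t r : ℕ → ℝ} (hβ : 0 ≤ β) (hμint : IntegrableOn μ (Icc 0 T))
    (hμ0 : ∀ x ∈ Icc 0 T, 0 ≤ μ x)
    (hdiff : ∀ w, ∀ x ∈ Icc 0 T, HasDerivWithinAt (fun s => I s w) (dI x w) (Icc 0 T) x)
    (hcont : ∀ w, ContinuousOn (fun x => dI x w) (Icc 0 T))
    (hbound : ∀ w, ∀ x ∈ Icc 0 T, |dI x w| ≤ μ x * (I x w + β))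
    (ht0 : t 0 = 0) (hmono : Monotone t) (htT : ∀ k, t k ≤ T) (hr : ∀ k, 0 ≤ r k)
    (hdec : ∀ k, I (t k) (z (k + 1)) + r k ≤ I (t k) (z k)) (k : ℕ) :
    I (t k) (z k) + ∑ i ∈ Finset.range k, r i
      ≤ (β + I 0 (z 0)) * Real.exp (∫ s in (0:ℝ)..T, μ s) := by
  have htmem : ∀ i, t i ∈ Icc 0 T := fun i => ⟨ht0 ▸ hmono i.zero_le, htT i⟩
  have hsub : ∀ i, Icc (t i) (t (i + 1)) ⊆ Icc 0 T :=
    fun i => Icc_subset_Icc (htmem i).1 (htmem (i + 1)).2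
  have hgd : ∀ w, ∀ x ∈ Icc 0 T,
      HasDerivWithinAt (fun s => I s w + β) (dI x w) (Icc 0 T) x :=
    fun w x hx => (hdiff w x hx).add_const β
  have hstep : ∀ i, I (t (i + 1)) (z (i + 1)) + β
      ≤ (I (t i) (z (i + 1)) + β) * Real.exp (∫ s in t i..t (i + 1), μ s) := fun i =>
    le_mul_exp_integral_of_abs_deriv_le_mul (fun x hx => (hgd _ x (hsub i hx)).mono (hsub i))
      ((hcont _).mono (hsub i)) (hμint.mono_set (hsub i)) (fun x hx => hμ0 x (hsub i hx))
      (fun x hx => hbound _ x (hsub i hx)) (hmono i.le_succ)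
  have hm0 : ∀ i, 0 ≤ ∫ s in t i..t (i + 1), μ s := fun i =>
    intervalIntegral.integral_nonneg (hmono i.le_succ) fun x hx => hμ0 x (hsub i hx)
  have henergy := add_sum_le_mul_exp_sum (u := fun i => I (t i) (z i) + β)
    (v := fun i => I (t i) (z (i + 1)) + β) hr hm0 hstep (fun i => by linarith [hdec i]) k
  rw [intervalIntegral.sum_integral_adjacent_intervals fun i _ =>
    (intervalIntegrable_iff_integrableOn_Icc_of_le (hmono i.le_succ)).2
      (hμint.mono_set (hsub i)), ht0] at henergy
  have hmono_exp := mul_exp_integral_le_of_abs_deriv_le_mul (hgd (z 0)) hμint hμ0 (hbound (z 0))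
    (htmem k)
  rw [add_comm β]
  linarith

theorem stmt15_general
    {Z : Type*}
    [NormedAddCommGroup Z]
    (T β c₀ c₁ : ℝ)
    (hβ : 0 < β) (hc₁ : 0 < c₁)
    (μ : ℝ → ℝ) (hμint : MeasureTheory.IntegrableOn μ (Icc 0 T))
    (hμ0 : ∀ t ∈ Icc (0:ℝ) T, 0 ≤ μ t)
    (I dI : ℝ → Z → ℝ)
    (hdiff : ∀ z : Z, ∀ t ∈ Icc (0:ℝ) T,
      HasDerivWithinAt (fun s => I s z) (dI t z) (Icc 0 T) t)
    (hcont : ∀ z : Z, ContinuousOn (fun t => dI t z) (Icc 0 T))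
    (hcoerc : ∀ t ∈ Icc (0:ℝ) T, ∀ z : Z, c₁ * ‖z‖ - c₀ ≤ I t z)
    (hbound : ∀ z : Z, ∀ t ∈ Icc (0:ℝ) T, |dI t z| ≤ μ t * (I t z + β))
    (R : Z → EReal) (hR0 : ∀ v : Z, 0 ≤ R v)
    (z : ℕ → Z) (t : ℕ → ℝ)
    (ht0 : t 0 = 0) (hmono : Monotone t) (htT : ∀ k, t k ≤ T)
    (hdecrease : ∀ k : ℕ,
      ((I (t k) (z (k + 1)) : ℝ) : EReal) + R (z (k + 1) - z k)
        ≤ ((I (t k) (z k) : ℝ) : EReal)) :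
    ∀ k : ℕ,
      ((I (t k) (z k) : ℝ) : EReal) + ∑ i ∈ Finset.range k, R (z (i + 1) - z i)
          ≤ (((β + I 0 (z 0)) * Real.exp (∫ s in (0:ℝ)..T, μ s) : ℝ) : EReal) ∧
      ‖z k‖ ≤ (c₀ + (β + I 0 (z 0)) * Real.exp (∫ s in (0:ℝ)..T, μ s)) / c₁ := by
  intro k
  set r : ℕ → ℝ := fun i => (R (z (i + 1) - z i)).toReal
  have hr0 : ∀ i, 0 ≤ r i := fun i => EReal.toReal_nonneg (hR0 _)
  have hRr : ∀ i, ((r i : ℝ) : EReal) = R (z (i + 1) - z i) :=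
    fun i => EReal.coe_toReal_of_coe_add_le (hR0 _) (hdecrease i)
  have hdec : ∀ i, I (t i) (z (i + 1)) + r i ≤ I (t i) (z i) := fun i => by
    have h := hdecrease i
    rwa [← hRr i, ← EReal.coe_add, EReal.coe_le_coe_iff] at h
  have henergy := add_sum_le_mul_exp_integral hβ.le hμint hμ0 hdiff hcont hbound ht0 hmono htT
    hr0 hdec k
  refine ⟨?_, ?_⟩
  · rw [← Finset.sum_congr rfl fun i _ => hRr i, ← EReal.coe_finset_sum, ← EReal.coe_add]
    exact EReal.coe_le_coe_iff.2 henergy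
  · rw [le_div_iff₀ hc₁]
    linarith [hcoerc (t k) ⟨ht0 ▸ hmono k.zero_le, htT k⟩ (z k),
      Finset.sum_nonneg fun i (_ : i ∈ Finset.range k) => hr0 i]

/-- **Boundedness of energy and dissipation along the iterates.** Let `Z` and `V` be real
Banach spaces with `Z` continuously embedded in `V` (via `ι`), `T > 0`, `τ ∈ (0,T]`,
`β > 0`, `c₀, c₁ > 0`, `μ ∈ L¹(0,T)` nonnegative, and `I : [0,T] × Z → ℝ` continuously
differentiable in time with `I(t,z) ≥ c₁‖z‖_Z − c₀` and `|∂ₜI(t,z)| ≤ μ(t)(I(t,z) + β)`.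
Let `R : Z → [0,∞]`, and let iterates `z_k ∈ Z`, `0 = t₀ ≤ t₁ ≤ … ≤ T` satisfy the time
update `t_k = t_{k−1} + τ − ‖z_k − z_{k−1}‖_V` and the energy decrease
`I(t_{k−1}, z_k) + R(z_k − z_{k−1}) ≤ I(t_{k−1}, z_{k−1})`. Then for every `k`:
`I(t_k, z_k) + Σ_{i=1}^k R(z_i − z_{i−1}) ≤ (β + I(0,z₀))·exp(∫₀ᵀ μ)` and
`‖z_k‖_Z ≤ (c₀ + (β + I(0,z₀))·exp(∫₀ᵀ μ))/c₁`. -/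
theorem stmt15
    {Z V : Type*}
    [NormedAddCommGroup Z] [NormedSpace ℝ Z] [CompleteSpace Z]
    [NormedAddCommGroup V] [NormedSpace ℝ V] [CompleteSpace V]
    (ι : Z →L[ℝ] V) (hinj : Function.Injective ι)
    (T τ β c₀ c₁ : ℝ) (hT : 0 < T) (hτ : 0 < τ) (hτT : τ ≤ T)
    (hβ : 0 < β) (hc₀ : 0 < c₀) (hc₁ : 0 < c₁)
    (μ : ℝ → ℝ) (hμint : MeasureTheory.IntegrableOn μ (Icc 0 T))
    (hμ0 : ∀ t ∈ Icc (0:ℝ) T, 0 ≤ μ t)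
    (I dI : ℝ → Z → ℝ)
    (hdiff : ∀ z : Z, ∀ t ∈ Icc (0:ℝ) T,
      HasDerivWithinAt (fun s => I s z) (dI t z) (Icc 0 T) t)
    (hcont : ∀ z : Z, ContinuousOn (fun t => dI t z) (Icc 0 T))
    (hcoerc : ∀ t ∈ Icc (0:ℝ) T, ∀ z : Z, c₁ * ‖z‖ - c₀ ≤ I t z)
    (hbound : ∀ z : Z, ∀ t ∈ Icc (0:ℝ) T, |dI t z| ≤ μ t * (I t z + β))
    (R : Z → EReal) (hR0 : ∀ v : Z, 0 ≤ R v)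
    (z : ℕ → Z) (t : ℕ → ℝ)
    (ht0 : t 0 = 0) (hmono : Monotone t) (htT : ∀ k, t k ≤ T)
    (hupdate : ∀ k : ℕ, t (k + 1) = t k + τ - ‖ι (z (k + 1) - z k)‖)
    (hdecrease : ∀ k : ℕ,
      ((I (t k) (z (k + 1)) : ℝ) : EReal) + R (z (k + 1) - z k)
        ≤ ((I (t k) (z k) : ℝ) : EReal)) :
    ∀ k : ℕ,
      ((I (t k) (z k) : ℝ) : EReal) + ∑ i ∈ Finset.range k, R (z (i + 1) - z i)
          ≤ (((β + I 0 (z 0)) * Real.exp (∫ s in (0:ℝ)..T, μ s) : ℝ) : EReal) ∧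
      ‖z k‖ ≤ (c₀ + (β + I 0 (z 0)) * Real.exp (∫ s in (0:ℝ)..T, μ s)) / c₁ :=
  stmt15_general T β c₀ c₁ hβ hc₁ μ hμint hμ0 I dI hdiff hcont hcoerc hbound R hR0 z t ht0 hmono htT
    hdecrease
end

section
/- Let Z and V be real reflexive Banach spaces with Z continuously and densely embedded in V. For each n ∈ ℕ let R_n : Z → [0,∞] and let R : Z → [0,∞] all be proper, convex, lower semicontinuous and positively 1-homogeneous, and assume the Mosco-convergence conditions: (i) for every sequence z_n ⇀ z weakly in Z, liminf_n R_n(z_n) ≥ R(z); (ii) for every z ∈ Z there exists a sequence z_n → z strongly in Z with limsup_n R_n(z_n) ≤ R(z). Let ξ_n ∈ Z* with ξ_n ⇀ ξ weakly in Z*, and suppose there is C > 0 with dist_{V*}(−ξ_n, ∂R_n(0)) ≤ C for all n. Then liminf_{n→∞} dist_{V*}(−ξ_n, ∂R_n(0)) ≥ dist_{V*}(−ξ, ∂R(0)). -/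
open Set Filter

variable {Z V : Type*} [NormedAddCommGroup Z] [NormedSpace ℝ Z]
  [NormedAddCommGroup V] [NormedSpace ℝ V]

/-- `∂f(0) = {η ∈ Z* : f(y) ≥ ⟨η, y⟩ for all y ∈ Z}`. -/
def subdiffZero {Z : Type*} [NormedAddCommGroup Z] [NormedSpace ℝ Z]
    (f : Z → EReal) : Set (Z →L[ℝ] ℝ) :=
  {η | ∀ y : Z, ((η y : ℝ) : EReal) ≤ f y}

private lemma vdualNorm_nonneg' (ι : Z →L[ℝ] V) (η : Z →L[ℝ] ℝ) : 0 ≤ VdualNorm ι η := by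
  by_cases h : BddAbove {r : ℝ | ∃ z : Z, ‖ι z‖ ≤ 1 ∧ r = η z}
  · exact le_csSup h ⟨0, by simp, by simp⟩
  · simp [VdualNorm, Real.sSup_of_not_bddAbove h]

private lemma pointwise_bound' (ι : Z →L[ℝ] V) (hinj : Function.Injective ι)
    {η : Z →L[ℝ] ℝ} {b : ℝ} (hInV : InVdual ι η) (hle : VdualNorm ι η ≤ b) :
    ∀ z : Z, |η z| ≤ b * ‖ι z‖ := by
  obtain ⟨C₀, hC₀⟩ := hInV
  have hbdd : BddAbove {r : ℝ | ∃ z : Z, ‖ι z‖ ≤ 1 ∧ r = η z} := by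
    refine ⟨|C₀|, ?_⟩
    rintro r ⟨z, hz, rfl⟩
    calc η z ≤ |η z| := le_abs_self _
      _ ≤ C₀ * ‖ι z‖ := hC₀ z
      _ ≤ |C₀| * ‖ι z‖ := mul_le_mul_of_nonneg_right (le_abs_self _) (norm_nonneg _)
      _ ≤ |C₀| * 1 := mul_le_mul_of_nonneg_left hz (abs_nonneg _)
      _ = |C₀| := mul_one _
  have key : ∀ z : Z, ‖ι z‖ ≤ 1 → η z ≤ b := fun z hz =>
    le_trans (le_csSup hbdd ⟨z, hz, rfl⟩) hle
  intro z
  rcases eq_or_ne (ι z) 0 with h0 | h0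
  · have hz0 : z = 0 := hinj (by simpa using h0)
    simp [hz0]
  · have hcpos : 0 < ‖ι z‖ := norm_pos_iff.mpr h0
    have hunit : ∀ z' : Z, ‖ι z'‖ = ‖ι z‖ → η (‖ι z‖⁻¹ • z') ≤ b := by
      intro z' hz'
      apply key
      rw [map_smul, norm_smul, hz', Real.norm_eq_abs,
        abs_of_nonneg (inv_nonneg.mpr hcpos.le), inv_mul_cancel₀ hcpos.ne']
    have h1 : η z ≤ b * ‖ι z‖ := by
      have hthis := hunit z rfl
      rw [map_smul, smul_eq_mul] at hthis
      calc η z = ‖ι z‖ * (‖ι z‖⁻¹ * η z) := by field_simp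
        _ ≤ ‖ι z‖ * b := mul_le_mul_of_nonneg_left hthis hcpos.le
        _ = b * ‖ι z‖ := mul_comm _ _
    have h2 : -(η z) ≤ b * ‖ι z‖ := by
      have hthis := hunit (-z) (by simp)
      rw [map_smul, map_neg, smul_eq_mul] at hthis
      calc -(η z) = ‖ι z‖ * (‖ι z‖⁻¹ * -(η z)) := by field_simp
        _ ≤ ‖ι z‖ * b := mul_le_mul_of_nonneg_left hthis hcpos.le
        _ = b * ‖ι z‖ := mul_comm _ _
    exact abs_le.mpr ⟨by linarith, h1⟩

/-- **Weak lower semicontinuity of the distance under Mosco-convergence.** Let `Z` and `V`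
be real reflexive Banach spaces with `Z` continuously and densely embedded in `V` (via `ι`).
Let `R_n, R : Z → [0,∞]` all be proper, convex, lower semicontinuous and positively
1-homogeneous, and assume Mosco-convergence of `R_n` to `R`. Let `ξ_n ⇀ ξ` weakly in `Z*`
with `dist_{V*}(−ξ_n, ∂R_n(0)) ≤ C` uniformly. Then
`liminf_n dist_{V*}(−ξ_n, ∂R_n(0)) ≥ dist_{V*}(−ξ, ∂R(0))`. -/
theorem stmt17 [CompleteSpace Z] [CompleteSpace V]
    (hreflZ : Function.Surjective ⇑(NormedSpace.inclusionInDoubleDual ℝ Z))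
    (hreflV : Function.Surjective ⇑(NormedSpace.inclusionInDoubleDual ℝ V))
    (ι : Z →L[ℝ] V) (hinj : Function.Injective ι) (hdense : DenseRange ι)
    (Rn : ℕ → Z → EReal) (R : Z → EReal)
    (hRn0 : ∀ n, ∀ v : Z, 0 ≤ Rn n v) (hR0 : ∀ v : Z, 0 ≤ R v)
    (hRnproper : ∀ n, ∃ v : Z, Rn n v ≠ ⊤) (hRproper : ∃ v : Z, R v ≠ ⊤)
    (hRnconvex : ∀ n, ∀ x y : Z, ∀ a b : ℝ, 0 ≤ a → 0 ≤ b → a + b = 1 →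
      Rn n (a • x + b • y) ≤ (a : EReal) * Rn n x + (b : EReal) * Rn n y)
    (hRconvex : ∀ x y : Z, ∀ a b : ℝ, 0 ≤ a → 0 ≤ b → a + b = 1 →
      R (a • x + b • y) ≤ (a : EReal) * R x + (b : EReal) * R y)
    (hRnlsc : ∀ n, LowerSemicontinuous (Rn n)) (hRlsc : LowerSemicontinuous R)
    (hRnhom : ∀ n, ∀ (v : Z) (l : ℝ), 0 < l → Rn n (l • v) = (l : EReal) * Rn n v)
    (hRhom : ∀ (v : Z) (l : ℝ), 0 < l → R (l • v) = (l : EReal) * R v)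
    (hMosco1 : ∀ (z : ℕ → Z) (zl : Z),
      (∀ f : Z →L[ℝ] ℝ, Tendsto (fun n => f (z n)) atTop (nhds (f zl))) →
      R zl ≤ liminf (fun n => Rn n (z n)) atTop)
    (hMosco2 : ∀ zl : Z, ∃ z : ℕ → Z, Tendsto z atTop (nhds zl) ∧
      limsup (fun n => Rn n (z n)) atTop ≤ R zl)
    (ξn : ℕ → Z →L[ℝ] ℝ) (ξ : Z →L[ℝ] ℝ)
    (hweak : ∀ zz : Z, Tendsto (fun n => ξn n zz) atTop (nhds (ξ zz)))
    (C : ℝ) (hC : 0 < C)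
    (hbd : ∀ n, distVdual ι (-ξn n) (subdiffZero (Rn n)) ≤ ((C : ℝ) : EReal)) :
    distVdual ι (-ξ) (subdiffZero R) ≤
      liminf (fun n => distVdual ι (-ξn n) (subdiffZero (Rn n))) atTop := by
  classical
  set L := liminf (fun n => distVdual ι (-ξn n) (subdiffZero (Rn n))) atTop with hLdef
  have hdnonneg : ∀ (η : Z →L[ℝ] ℝ) (A : Set (Z →L[ℝ] ℝ)), (0:EReal) ≤ distVdual ι η A := by
    intro η A
    refine le_sInf ?_
    rintro r ⟨wit, _, _, rfl⟩
    exact_mod_cast vdualNorm_nonneg' ι (η - wit)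
  have hL0 : (0:EReal) ≤ L :=
    le_liminf_of_le (by isBoundedDefault) (Eventually.of_forall fun n => hdnonneg _ _)
  -- key claim: dist ≤ b for every real b with 0 < b and L < b
  have key : ∀ b : ℝ, 0 < b → L < (b:EReal) →
      distVdual ι (-ξ) (subdiffZero R) ≤ (b:EReal) := by
    intro b hbpos hLb
    have hfreq : ∃ᶠ n in atTop, distVdual ι (-ξn n) (subdiffZero (Rn n)) < (b:EReal) :=
      frequently_lt_of_liminf_lt (by isBoundedDefault) hLb
    -- selection of subgradients
    have hsel : ∀ n, ∃ wn : Z →L[ℝ] ℝ,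
        (distVdual ι (-ξn n) (subdiffZero (Rn n)) < (b:EReal)) →
        (wn ∈ subdiffZero (Rn n) ∧ ∀ z : Z, |(-ξn n - wn) z| ≤ b * ‖ι z‖) := by
      intro n
      by_cases h : distVdual ι (-ξn n) (subdiffZero (Rn n)) < (b:EReal)
      · obtain ⟨r, ⟨wn, hwn, hInV, rfl⟩, hrb⟩ := sInf_lt_iff.mp h
        refine ⟨wn, fun _ => ⟨hwn, pointwise_bound' ι hinj hInV ?_⟩⟩
        exact_mod_cast hrb.le
      · exact ⟨0, fun h' => absurd h' h⟩
    choose w hw using hsel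
    set η : ℕ → Z →L[ℝ] ℝ := fun n => -ξn n - w n with hηdef
    set S : Set ℕ := {n | distVdual ι (-ξn n) (subdiffZero (Rn n)) < (b:EReal)} with hSdef
    haveI hne : (atTop ⊓ 𝓟 S).NeBot := frequently_iff_neBot.mp hfreq
    set U : Ultrafilter ℕ := Ultrafilter.of (atTop ⊓ 𝓟 S) with hUdef
    have hUle : (U : Filter ℕ) ≤ atTop ⊓ 𝓟 S := Ultrafilter.of_le _
    have hUatTop : (U : Filter ℕ) ≤ atTop := hUle.trans inf_le_left
    have hUS : ∀ᶠ n in (U : Filter ℕ), n ∈ S :=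
      le_principal_iff.mp (hUle.trans inf_le_right)
    -- Banach–Steinhaus
    obtain ⟨M, hM⟩ : ∃ M, ∀ n, ‖ξn n‖ ≤ M := by
      apply banach_steinhaus
      intro z
      obtain ⟨c, hc⟩ := ((hweak z).norm).bddAbove_range
      exact ⟨c, fun n => hc ⟨n, rfl⟩⟩
    -- pointwise ultrafilter limit of η n
    have hlim : ∀ z : Z, ∃ a : ℝ, |a| ≤ b * ‖ι z‖ ∧
        Tendsto (fun n => η n z) (U : Filter ℕ) (nhds a) := by
      intro z
      have hmem : ∀ᶠ n in (U : Filter ℕ), η n z ∈ Icc (-(b * ‖ι z‖)) (b * ‖ι z‖) := by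
        filter_upwards [hUS] with n hn
        exact abs_le.mp ((hw n hn).2 z)
      obtain ⟨a, ha, hle⟩ := isCompact_Icc.ultrafilter_le_nhds
        (U.map fun n => η n z) (le_principal_iff.mpr (mem_map.mpr hmem))
      exact ⟨a, abs_le.mpr ⟨ha.1, ha.2⟩, hle⟩
    choose φ hφ1 hφ2 using hlim
    have hadd : ∀ y z : Z, φ (y + z) = φ y + φ z := fun y z =>
      tendsto_nhds_unique (hφ2 (y + z)) (by simpa [map_add] using (hφ2 y).add (hφ2 z))
    have hsmul : ∀ (c : ℝ) (z : Z), φ (c • z) = c * φ z := fun c z =>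
      tendsto_nhds_unique (hφ2 (c • z))
        (by simpa [map_smul, smul_eq_mul] using (hφ2 z).const_mul c)
    let φL : Z →L[ℝ] ℝ := LinearMap.mkContinuousOfExistsBound
      { toFun := φ, map_add' := hadd, map_smul' := by intro c z; simpa using hsmul c z }
      ⟨b * ‖ι‖, fun z => by
        have h1 : |φ z| ≤ b * ‖ι z‖ := hφ1 z
        have h2 : ‖ι z‖ ≤ ‖ι‖ * ‖z‖ := ι.le_opNorm z
        calc ‖φ z‖ = |φ z| := rfl
          _ ≤ b * ‖ι z‖ := h1
          _ ≤ b * (‖ι‖ * ‖z‖) := mul_le_mul_of_nonneg_left h2 hbpos.le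
          _ = b * ‖ι‖ * ‖z‖ := (mul_assoc _ _ _).symm⟩
    have hφLapp : ∀ z : Z, φL z = φ z := fun z => rfl
    set wlim : Z →L[ℝ] ℝ := -ξ - φL with hwlimdef
    -- wlim ∈ ∂R(0)
    have hwmem : wlim ∈ subdiffZero R := by
      intro y
      obtain ⟨zs, hzs, hzR⟩ := hMosco2 y
      have hd : Tendsto (fun n => ‖zs n - y‖) atTop (nhds 0) := by
        have := (hzs.sub (tendsto_const_nhds (x := y))).norm
        simpa using this
      have t1 : Tendsto (fun n => ξn n (zs n)) atTop (nhds (ξ y)) := by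
        have h1 : Tendsto (fun n => ξn n (zs n - y)) atTop (nhds 0) := by
          refine squeeze_zero_norm (a := fun n => M * ‖zs n - y‖) (fun n => ?_)
            (by simpa using hd.const_mul M)
          calc ‖ξn n (zs n - y)‖ ≤ ‖ξn n‖ * ‖zs n - y‖ := (ξn n).le_opNorm _
            _ ≤ M * ‖zs n - y‖ := mul_le_mul_of_nonneg_right (hM n) (norm_nonneg _)
        have := h1.add (hweak y)
        simpa [map_sub, sub_add_cancel] using this
      have t2 : Tendsto (fun n => η n (zs n)) (U : Filter ℕ) (nhds (φ y)) := by
        have h1 : Tendsto (fun n => η n (zs n - y)) (U : Filter ℕ) (nhds 0) := by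
          refine squeeze_zero_norm' (a := fun n => b * ‖ι‖ * ‖zs n - y‖) ?_
            (by simpa using (hd.const_mul (b * ‖ι‖)).mono_left hUatTop)
          filter_upwards [hUS] with n hn
          calc ‖η n (zs n - y)‖ = |η n (zs n - y)| := rfl
            _ ≤ b * ‖ι (zs n - y)‖ := (hw n hn).2 _
            _ ≤ b * (‖ι‖ * ‖zs n - y‖) :=
              mul_le_mul_of_nonneg_left (ι.le_opNorm _) hbpos.le
            _ = b * ‖ι‖ * ‖zs n - y‖ := (mul_assoc _ _ _).symm
        have := h1.add (hφ2 y)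
        simpa [map_sub, sub_add_cancel] using this
      have hwn : ∀ n, (w n) (zs n) = -(ξn n (zs n)) - η n (zs n) := by
        intro n
        simp [hηdef, ContinuousLinearMap.sub_apply, ContinuousLinearMap.neg_apply]
      have t3 : Tendsto (fun n => (w n) (zs n)) (U : Filter ℕ) (nhds (wlim y)) := by
        have hcomb := ((t1.mono_left hUatTop).neg).sub t2
        have hval : wlim y = -(ξ y) - φ y := by
          simp [hwlimdef, ContinuousLinearMap.sub_apply, ContinuousLinearMap.neg_apply, hφLapp]
        rw [hval]
        simpa [hwn] using hcomb
      have t4 : Tendsto (fun n => ((w n (zs n) : ℝ) : EReal)) (U : Filter ℕ)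
          (nhds ((wlim y : ℝ) : EReal)) := EReal.tendsto_coe.mpr t3
      have e1 : limsup (fun n => ((w n (zs n) : ℝ) : EReal)) (U : Filter ℕ)
          = ((wlim y : ℝ) : EReal) := t4.limsup_eq
      have e2 : limsup (fun n => ((w n (zs n) : ℝ) : EReal)) (U : Filter ℕ)
          ≤ limsup (fun n => Rn n (zs n)) (U : Filter ℕ) := by
        exact limsup_le_limsup (by filter_upwards [hUS] with n hn; exact (hw n hn).1 (zs n))
      have e3 : limsup (fun n => Rn n (zs n)) (U : Filter ℕ)
          ≤ limsup (fun n => Rn n (zs n)) atTop := limsup_le_limsup_of_le hUatTop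
      calc ((wlim y : ℝ) : EReal) = _ := e1.symm
        _ ≤ _ := e2
        _ ≤ _ := e3
        _ ≤ R y := hzR
    -- the difference -ξ - wlim equals φL
    have heq : -ξ - wlim = φL := by
      ext z
      simp [hwlimdef, ContinuousLinearMap.sub_apply, ContinuousLinearMap.neg_apply]
    have hInV : InVdual ι (-ξ - wlim) := by
      rw [heq]; exact ⟨b, fun z => by rw [hφLapp]; exact hφ1 z⟩
    have hnorm : VdualNorm ι (-ξ - wlim) ≤ b := by
      rw [heq]
      apply Real.sSup_le _ hbpos.le
      rintro r ⟨z, hz, rfl⟩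
      calc φL z ≤ |φL z| := le_abs_self _
        _ ≤ b * ‖ι z‖ := by rw [hφLapp]; exact hφ1 z
        _ ≤ b * 1 := mul_le_mul_of_nonneg_left hz hbpos.le
        _ = b := mul_one _
    calc distVdual ι (-ξ) (subdiffZero R)
        ≤ ((VdualNorm ι (-ξ - wlim) : ℝ) : EReal) := sInf_le ⟨wlim, hwmem, hInV, rfl⟩
      _ ≤ (b : EReal) := EReal.coe_le_coe_iff.mpr hnorm
  by_contra hcon
  push_neg at hcon
  obtain ⟨b, hb1, hb2⟩ := EReal.lt_iff_exists_real_btwn.mp hcon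
  have hbpos : (0:ℝ) < b := by
    have : ((0:ℝ) : EReal) < (b : EReal) := lt_of_le_of_lt (by exact_mod_cast hL0) hb1
    exact_mod_cast this
  exact absurd (key b hbpos hb1) (not_le.mpr hb2)
end

section
/- Let Z be a real reflexive Banach space, T > 0, β > 0, and μ ∈ L¹(0,T) nonnegative. Let I : [0,T] × Z → ℝ be such that for each t ∈ [0,T] the functional I(t,·) is sequentially weakly lower semicontinuous on Z, such that for each z the map t ↦ I(t,z) is continuously differentiable, and such that |∂_t I(t,z)| ≤ μ(t)(I(t,z) + β) for all t ∈ [0,T] and z ∈ Z. Then for all sequences t_k → t in [0,T] and z_k ⇀ z weakly in Z it holds that I(t,z) ≤ liminf_{k→∞} I(t_k, z_k). -/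
open Set Filter MeasureTheory Real Topology

/-! For fixed `z`, the function `f(s) = I(s,z) + β` satisfies `|f'| ≤ μ f`. Where `f ≥ 0`
this is a Gronwall inequality for `log (f + ε)`, giving `f(t) ≤ f(s) · exp |∫ₜˢ μ|`. Where
`f ≤ 0` it forces `f' = 0`, so `min f 0` is constant and a function that is negative somewhere
is constant. In both cases
`I(t_k, z_k) + β ≥ min (I(t, z_k) + β) ((I(t, z_k) + β) · exp (-|∫_t^{t_k} μ|))`,
and the integral tends to `0` because `μ` is integrable; weak lower semicontinuity of `I(t, ·)`
then concludes. -/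

section Gronwall

variable {f f' μ : ℝ → ℝ} {x y : ℝ}

theorem abs_sub_le_abs_integral_of_abs_deriv_le
    (hf : ∀ u ∈ uIcc x y, HasDerivWithinAt f (f' u) (uIcc x y) u)
    (hf' : ContinuousOn f' (uIcc x y)) (hμ : IntegrableOn μ (uIcc x y))
    (hbound : ∀ u ∈ uIcc x y, |f' u| ≤ μ u) : |f y - f x| ≤ |∫ u in x..y, μ u| := by
  have hftc : ∫ u in x..y, f' u = f y - f x :=
    intervalIntegral.integral_eq_sub_of_hasDeriv_right (fun u hu => (hf u hu).continuousWithinAt)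
      (fun u hu => ((hf u (Ioo_subset_Icc_self hu)).hasDerivAt
        (Icc_mem_nhds hu.1 hu.2)).hasDerivWithinAt) hf'.intervalIntegrable
  rw [← hftc, ← Real.norm_eq_abs]
  exact intervalIntegral.norm_integral_le_abs_of_norm_le
    (ae_restrict_of_forall_mem measurableSet_uIoc fun u hu => hbound u (uIoc_subset_uIcc hu))
    hμ.intervalIntegrable

theorem le_mul_exp_abs_integral_of_abs_deriv_le_mul
    (hf : ∀ u ∈ uIcc x y, HasDerivWithinAt f (f' u) (uIcc x y) u)
    (hf' : ContinuousOn f' (uIcc x y)) (hμ : IntegrableOn μ (uIcc x y))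
    (hμ0 : ∀ u ∈ uIcc x y, 0 ≤ μ u) (hf0 : ∀ u ∈ uIcc x y, 0 ≤ f u)
    (hbound : ∀ u ∈ uIcc x y, |f' u| ≤ μ u * f u) :
    f x ≤ f y * exp |∫ u in x..y, μ u| := by
  set A := |∫ u in x..y, μ u|
  have hfc : ContinuousOn f (uIcc x y) := fun u hu => (hf u hu).continuousWithinAt
  have hshift : ∀ ε > 0, f x + ε ≤ (f y + ε) * exp A := by
    intro ε hε
    have hpos : ∀ u ∈ uIcc x y, 0 < f u + ε := fun u hu => by linarith [hf0 u hu]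
    have key := abs_sub_le_abs_integral_of_abs_deriv_le (f := fun u => log (f u + ε))
      (f' := fun u => f' u / (f u + ε))
      (fun u hu => ((hf u hu).add_const ε).log (hpos u hu).ne')
      (hf'.div (hfc.add continuousOn_const) fun u hu => (hpos u hu).ne') hμ
      (fun u hu => by
        rw [abs_div, abs_of_pos (hpos u hu), div_le_iff₀ (hpos u hu)]
        nlinarith [hbound u hu, hμ0 u hu])
    have h := exp_le_exp.mpr (sub_le_iff_le_add'.mp (abs_sub_le_iff.mp key).2)
    rwa [exp_add, exp_log (hpos x left_mem_uIcc), exp_log (hpos y right_mem_uIcc)] at h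
  refine le_of_forall_pos_le_add fun δ hδ => ?_
  have hε : 0 < δ * exp (-A) := by positivity
  have h := hshift _ hε
  rw [add_mul, mul_assoc, ← exp_add, neg_add_cancel, exp_zero, mul_one] at h
  linarith

theorem hasDerivWithinAt_min_zero {s : Set ℝ} {d : ℝ} (hf : HasDerivWithinAt f d s x)
    (hd : f x ≤ 0 → d = 0) : HasDerivWithinAt (fun y => min (f y) 0) 0 s x := by
  rcases lt_or_ge 0 (f x) with hpos | hnonpos
  · have hev : (fun y => min (f y) 0) =ᶠ[𝓝[s] x] fun _ => 0 :=
      (hf.continuousWithinAt.eventually (lt_mem_nhds hpos)).mono fun y hy => min_eq_right hy.le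
    exact (hasDerivWithinAt_const x s 0).congr_of_eventuallyEq hev (min_eq_right hpos.le)
  · rw [hd hnonpos, hasDerivWithinAt_iff_isLittleO] at hf
    rw [hasDerivWithinAt_iff_isLittleO]
    refine (Asymptotics.IsBigO.of_bound' (Eventually.of_forall fun y => ?_)).trans_isLittleO hf
    simpa using abs_min_sub_min_le_max (f y) 0 (f x) 0

theorem min_zero_eq_of_deriv_eq_zero_of_nonpos {s : Set ℝ} (hs : Convex ℝ s)
    (hf : ∀ u ∈ s, HasDerivWithinAt f (f' u) s u) (hzero : ∀ u ∈ s, f u ≤ 0 → f' u = 0)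
    (hx : x ∈ s) (hy : y ∈ s) : min (f y) 0 = min (f x) 0 := by
  have h := hs.norm_image_sub_le_of_norm_hasDerivWithin_le (f := fun u => min (f u) 0)
    (f' := fun _ => 0) (C := 0) (fun u hu => hasDerivWithinAt_min_zero (hf u hu) (hzero u hu))
    (fun _ _ => by simp) hx hy
  simpa [sub_eq_zero] using h

theorem min_le_of_abs_deriv_le_mul
    (hf : ∀ u ∈ uIcc x y, HasDerivWithinAt f (f' u) (uIcc x y) u)
    (hf' : ContinuousOn f' (uIcc x y)) (hμ : IntegrableOn μ (uIcc x y))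
    (hμ0 : ∀ u ∈ uIcc x y, 0 ≤ μ u) (hbound : ∀ u ∈ uIcc x y, |f' u| ≤ μ u * f u) :
    min (f x) (f x * exp (-|∫ u in x..y, μ u|)) ≤ f y := by
  have hzero : ∀ u ∈ uIcc x y, f u ≤ 0 → f' u = 0 := fun u hu hfu =>
    abs_nonpos_iff.mp ((hbound u hu).trans (mul_nonpos_of_nonneg_of_nonpos (hμ0 u hu) hfu))
  have hmin : ∀ u ∈ uIcc x y, min (f u) 0 = min (f x) 0 := fun u hu =>
    min_zero_eq_of_deriv_eq_zero_of_nonpos (convex_uIcc x y) hf hzero left_mem_uIcc hu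
  rcases lt_or_ge (f x) 0 with hneg | hnonneg
  · have hy := hmin y right_mem_uIcc
    rw [min_eq_left hneg.le] at hy
    obtain ⟨hyx, -⟩ | ⟨h0, -⟩ := min_eq_iff.mp hy
    · exact min_le_of_left_le hyx.ge
    · exact absurd h0 hneg.ne'
  · have hf0 : ∀ u ∈ uIcc x y, 0 ≤ f u := fun u hu => by
      simpa [min_eq_right hnonneg] using hmin u hu
    refine min_le_of_right_le ?_
    rw [← le_div_iff₀ (exp_pos _), exp_neg, div_inv_eq_mul]
    exact le_mul_exp_abs_integral_of_abs_deriv_le_mul hf hf' hμ hμ0 hf0 hbound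

end Gronwall

theorem tendsto_abs_integral_nhdsWithin {μ : ℝ → ℝ} {a b t : ℝ}
    (hμ : IntegrableOn μ (Icc a b)) (ht : t ∈ Icc a b) :
    Tendsto (fun s => |∫ u in t..s, μ u|) (𝓝[Icc a b] t) (𝓝 0) := by
  have hab : a ≤ b := ht.1.trans ht.2
  have hcont := intervalIntegral.continuousOn_primitive_interval' (μ := volume)
    ((intervalIntegrable_iff_integrableOn_Icc_of_le hab).2 hμ) (by rwa [uIcc_of_le hab])
  rw [uIcc_of_le hab] at hcont
  simpa using (hcont t ht).tendsto.abs

theorem le_liminf_of_min_mul_exp_le {ι : Type*} {l : Filter ι} {u v A : ι → ℝ} {β : ℝ}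
    (hA : Tendsto A l (𝓝 0)) (h : ∀ k, min (v k + β) ((v k + β) * exp (-A k)) ≤ u k + β) :
    liminf (fun k => (v k : EReal)) l ≤ liminf (fun k => (u k : EReal)) l := by
  rw [le_liminf_iff]
  intro b hb
  obtain ⟨c, hbc, hcv⟩ := EReal.lt_iff_exists_real_btwn.mp hb
  obtain ⟨b₀, hbb₀, hb₀c⟩ := EReal.lt_iff_exists_real_btwn.mp hbc
  have hb₀c : b₀ < c := by exact_mod_cast hb₀c
  have hv : ∀ᶠ k in l, c < v k :=
    (eventually_lt_of_lt_liminf hcv).mono fun k hk => by exact_mod_cast hk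
  have hlim : Tendsto (fun k => min (c + β) ((c + β) * exp (-A k))) l (𝓝 (c + β)) :=
    ((by fun_prop : Continuous fun a => min (c + β) ((c + β) * exp (-a))).tendsto' 0 (c + β)
      (by simp)).comp hA
  filter_upwards [hv, hlim.eventually (lt_mem_nhds (by linarith : b₀ + β < c + β))]
    with k hvk hk
  have hmono : min (c + β) ((c + β) * exp (-A k)) ≤ min (v k + β) ((v k + β) * exp (-A k)) :=
    min_le_min (by linarith) (by gcongr)
  exact hbb₀.trans (EReal.coe_lt_coe_iff.mpr (by linarith [h k]))

theorem stmt19_general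
    {Z : Type*} [NormedAddCommGroup Z] [NormedSpace ℝ Z]
    (T β : ℝ)
    (μ : ℝ → ℝ) (hμint : MeasureTheory.IntegrableOn μ (Icc 0 T))
    (hμ0 : ∀ t ∈ Icc (0:ℝ) T, 0 ≤ μ t)
    (I dI : ℝ → Z → ℝ)
    (hlsc : ∀ t ∈ Icc (0:ℝ) T, ∀ (zk : ℕ → Z) (zl : Z),
      (∀ f : Z →L[ℝ] ℝ, Tendsto (fun k => f (zk k)) atTop (nhds (f zl))) →
      ((I t zl : ℝ) : EReal) ≤ liminf (fun k => ((I t (zk k) : ℝ) : EReal)) atTop)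
    (hdiff : ∀ z : Z, ∀ t ∈ Icc (0:ℝ) T,
      HasDerivWithinAt (fun s => I s z) (dI t z) (Icc 0 T) t)
    (hcont : ∀ z : Z, ContinuousOn (fun t => dI t z) (Icc 0 T))
    (hbound : ∀ z : Z, ∀ t ∈ Icc (0:ℝ) T, |dI t z| ≤ μ t * (I t z + β)) :
    ∀ (tk : ℕ → ℝ) (t : ℝ) (zk : ℕ → Z) (zl : Z),
      (∀ k, tk k ∈ Icc (0:ℝ) T) → t ∈ Icc (0:ℝ) T → Tendsto tk atTop (nhds t) →
      (∀ f : Z →L[ℝ] ℝ, Tendsto (fun k => f (zk k)) atTop (nhds (f zl))) →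
      ((I t zl : ℝ) : EReal) ≤ liminf (fun k => ((I (tk k) (zk k) : ℝ) : EReal)) atTop := by
  intro tk t zk zl htk ht htt hweak
  have hgronwall : ∀ z, ∀ s ∈ Icc (0:ℝ) T,
      min (I t z + β) ((I t z + β) * exp (-|∫ u in t..s, μ u|)) ≤ I s z + β := by
    intro z s hs
    have hsub : uIcc t s ⊆ Icc 0 T := uIcc_subset_Icc ht hs
    exact min_le_of_abs_deriv_le_mul (f := fun r => I r z + β) (f' := fun r => dI r z)
      (fun r hr => ((hdiff z r (hsub hr)).add_const β).mono hsub) ((hcont z).mono hsub)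
      (hμint.mono_set hsub) (fun r hr => hμ0 r (hsub hr)) (fun r hr => hbound z r (hsub hr))
  have hA : Tendsto (fun k => |∫ u in t..tk k, μ u|) atTop (𝓝 0) :=
    (tendsto_abs_integral_nhdsWithin hμint ht).comp
      (tendsto_nhdsWithin_iff.mpr ⟨htt, .of_forall htk⟩)
  calc ((I t zl : ℝ) : EReal) ≤ liminf (fun k => ((I t (zk k) : ℝ) : EReal)) atTop :=
        hlsc t ht zk zl hweak
    _ ≤ liminf (fun k => ((I (tk k) (zk k) : ℝ) : EReal)) atTop :=
        le_liminf_of_min_mul_exp_le hA fun k => hgronwall (zk k) (tk k) (htk k)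

/-- **Combined lower semicontinuity of the energy.** Let `Z` be a real reflexive Banach
space, `T > 0`, `β > 0`, and `μ ∈ L¹(0,T)` nonnegative. Let `I : [0,T] × Z → ℝ` be such
that `I(t,·)` is sequentially weakly lower semicontinuous for each `t`, `t ↦ I(t,z)` is
continuously differentiable for each `z`, and `|∂ₜI(t,z)| ≤ μ(t)(I(t,z) + β)`. Then for
all sequences `t_k → t` in `[0,T]` and `z_k ⇀ z` weakly in `Z`:
`I(t,z) ≤ liminf_k I(t_k, z_k)`. -/
theorem stmt19
    {Z : Type*} [NormedAddCommGroup Z] [NormedSpace ℝ Z] [CompleteSpace Z]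
    (hrefl : Function.Surjective ⇑(NormedSpace.inclusionInDoubleDual ℝ Z))
    (T β : ℝ) (hT : 0 < T) (hβ : 0 < β)
    (μ : ℝ → ℝ) (hμint : MeasureTheory.IntegrableOn μ (Icc 0 T))
    (hμ0 : ∀ t ∈ Icc (0:ℝ) T, 0 ≤ μ t)
    (I dI : ℝ → Z → ℝ)
    (hlsc : ∀ t ∈ Icc (0:ℝ) T, ∀ (zk : ℕ → Z) (zl : Z),
      (∀ f : Z →L[ℝ] ℝ, Tendsto (fun k => f (zk k)) atTop (nhds (f zl))) →
      ((I t zl : ℝ) : EReal) ≤ liminf (fun k => ((I t (zk k) : ℝ) : EReal)) atTop)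
    (hdiff : ∀ z : Z, ∀ t ∈ Icc (0:ℝ) T,
      HasDerivWithinAt (fun s => I s z) (dI t z) (Icc 0 T) t)
    (hcont : ∀ z : Z, ContinuousOn (fun t => dI t z) (Icc 0 T))
    (hbound : ∀ z : Z, ∀ t ∈ Icc (0:ℝ) T, |dI t z| ≤ μ t * (I t z + β)) :
    ∀ (tk : ℕ → ℝ) (t : ℝ) (zk : ℕ → Z) (zl : Z),
      (∀ k, tk k ∈ Icc (0:ℝ) T) → t ∈ Icc (0:ℝ) T → Tendsto tk atTop (nhds t) →
      (∀ f : Z →L[ℝ] ℝ, Tendsto (fun k => f (zk k)) atTop (nhds (f zl))) →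
      ((I t zl : ℝ) : EReal) ≤ liminf (fun k => ((I (tk k) (zk k) : ℝ) : EReal)) atTop :=
  stmt19_general T β μ hμint hμ0 I dI hlsc hdiff hcont hbound
end
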